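/- arXiv:1508.02580 — 7 statements merged into one kernel-verified Lean document; each statement's English description precedes it below -/
import Mathlib

section
/- Let p be a prime and γ a positive integer. If A(z,t) ∈ ℤ[z][t] is monic in t of t-degree d and satisfies A(z, Φ_p(z)) = 0 modulo p^γ (i.e. every coefficient of the power series A(z,Φ_p(z)) is divisible by p^γ), then v_p(d!) ≥ γ, where v_p denotes the p-adic valuation. In particular, the power series Φ_p(z) is transcendental over ℤ[z]: there is no nonzero polynomial A(z,t) ∈ ℤ[z][t] with A(z,Φ_p(z)) = 0 as a formal power series. -/
open PowerSeries
open scoped Classical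

/-- `Φ_p(z) = Σ_{n≥0} z^{p^n}` as a formal power series over `ℤ`. -/
noncomputable def Phi (p : ℕ) : PowerSeries ℤ :=
  PowerSeries.mk fun m => if ∃ n : ℕ, m = p ^ n then 1 else 0

/-- Evaluation of a polynomial `A(z,t) ∈ ℤ[z][t]` at `t = Φ_p(z)`, yielding a
formal power series in `z`. -/
noncomputable def evalPhi (p : ℕ) (A : Polynomial (Polynomial ℤ)) : PowerSeries ℤ :=
  Polynomial.eval₂ Polynomial.coeToPowerSeries.ringHom (Phi p) A

/-!
The coefficient of `z^M` in `Φ_p^j` counts the ways of writing `M` as an ordered sum of `j`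
powers of `p`. As the base-`p` digit sum `s_p` is subadditive with `s_p(p^n) = 1`, this
coefficient vanishes when `j < s_p(M)`, and it equals `j!` when `M` is a sum of `j` distinct
powers of `p`. Let `d` be the `t`-degree of `A` and `c z^{i₀}` the leading term of its leading
coefficient. For `N = p^m (1 + p + ⋯ + p^{d-1})` with `p^m` beyond every `z`-degree in `A`, the
coefficient of `z^{N + i₀}` in `A(z, Φ_p(z))` is `c · d!`: every other contribution
`a_{j,u} [z^{N + i₀ - u}] Φ_p^j` has `s_p(N + i₀ - u) > j`.
-/

open Finset
open scoped Nat

section Digits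

variable {p : ℕ}

theorem sum_digits_pow_mul_add (hp : 1 < p) {m r : ℕ} (K : ℕ) (hr : r < p ^ m) :
    (p.digits (p ^ m * K + r)).sum = (p.digits K).sum + (p.digits r).sum := by
  rcases K.eq_zero_or_pos with rfl | hK
  · simp
  have hlen : (p.digits r).length ≤ m := (Nat.digits_length_le_iff hp r).mpr hr
  obtain ⟨k, hk⟩ := Nat.exists_eq_add_of_le hlen
  rw [add_comm, hk, ← Nat.digits_append_zeroes_append_digits hp hK]
  simp [add_comm]

theorem sum_digits_pow (hp : 1 < p) (n : ℕ) : (p.digits (p ^ n)).sum = 1 := by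
  simpa [Nat.digits_of_lt p 1 one_ne_zero hp] using
    sum_digits_pow_mul_add hp 1 (pow_pos (zero_lt_one.trans hp) n)

theorem sum_digits_pos {n : ℕ} (hn : n ≠ 0) : 0 < (p.digits n).sum := by
  refine Nat.pos_of_ne_zero fun h => Nat.getLast_digit_ne_zero p hn ?_
  exact List.sum_eq_zero_iff.mp h _ (List.getLast_mem _)

-- Legendre's formula `(p - 1) v_p(n!) = n - s_p(n)` turns `a! b! ∣ (a + b)!` into subadditivity.
theorem sum_digits_add_le (hp : p.Prime) (a b : ℕ) :
    (p.digits (a + b)).sum ≤ (p.digits a).sum + (p.digits b).sum := by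
  have := Fact.mk hp
  have hv : padicValNat p a ! + padicValNat p b ! ≤ padicValNat p (a + b)! := by
    rw [← padicValNat.mul (Nat.factorial_ne_zero a) (Nat.factorial_ne_zero b),
      ← padicValNat_dvd_iff_le (Nat.factorial_ne_zero _)]
    exact pow_padicValNat_dvd.trans (Nat.factorial_mul_factorial_dvd_factorial_add a b)
  have hmul := Nat.mul_le_mul_left (p - 1) hv
  rw [Nat.mul_add, sub_one_mul_padicValNat_factorial, sub_one_mul_padicValNat_factorial,
    sub_one_mul_padicValNat_factorial] at hmul
  have := Nat.digit_sum_le p a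
  have := Nat.digit_sum_le p b
  have := Nat.digit_sum_le p (a + b)
  omega

theorem sum_digits_le_sum_digits_sub_one_add_one (hp : p.Prime) (n : ℕ) :
    (p.digits n).sum ≤ (p.digits (n - 1)).sum + 1 := by
  rcases n.eq_zero_or_pos with rfl | hn
  · simp
  simpa [Nat.sub_add_cancel hn, Nat.digits_of_lt p 1 one_ne_zero hp.one_lt]
    using sum_digits_add_le hp (n - 1) 1

theorem sum_digits_mul_le_sum_digits_mul_sub_one (hp : p.Prime) (q : ℕ) :
    (p.digits (p * q)).sum ≤ (p.digits (p * q - 1)).sum := by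
  rcases q.eq_zero_or_pos with rfl | hq
  · simp
  have hpq : p * q - 1 = p ^ 1 * (q - 1) + (p - 1) := by
    rw [pow_one, Nat.mul_sub_one]
    have : p ≤ p * q := Nat.le_mul_of_pos_right p hq
    have := hp.pos
    omega
  have hp1 : p - 1 < p ^ 1 := by rw [pow_one]; exact Nat.sub_lt hp.pos one_pos
  have hpq1 : (p.digits (p * q)).sum = (p.digits q).sum := by
    simpa using sum_digits_pow_mul_add hp.one_lt (m := 1) q (r := 0) (by simp [hp.pos])
  rw [hpq, sum_digits_pow_mul_add hp.one_lt _ hp1, hpq1,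
    Nat.digits_of_lt p (p - 1) (Nat.sub_ne_zero_of_lt hp.one_lt) (Nat.sub_lt hp.pos one_pos)]
  have := sum_digits_le_sum_digits_sub_one_add_one hp q
  have := hp.two_le
  simp only [List.sum_cons, List.sum_nil]
  omega

theorem sum_digits_le_sum_digits_sub_pow (hp : p.Prime) {n q r : ℕ} (hq : q ≠ 0)
    (hr : r < p ^ n) :
    (p.digits (p ^ n * (p * q) + r)).sum ≤ (p.digits (p ^ n * (p * q) + r - p ^ n)).sum := by
  have hsub : p ^ n * (p * q) + r - p ^ n = p ^ n * (p * q - 1) + r := by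
    have : p ^ n ≤ p ^ n * (p * q) :=
      Nat.le_mul_of_pos_right _ (Nat.mul_pos hp.pos (Nat.pos_of_ne_zero hq))
    rw [Nat.mul_sub_one]
    omega
  rw [hsub, sum_digits_pow_mul_add hp.one_lt _ hr, sum_digits_pow_mul_add hp.one_lt _ hr]
  have := sum_digits_mul_le_sum_digits_mul_sub_one hp q
  omega

theorem sum_digits_lt_sum_digits_pow_mul_add_sub (hp : 1 < p) {m a b : ℕ} (K : ℕ) (hba : b < a)
    (ha : a < p ^ m) : (p.digits K).sum < (p.digits (p ^ m * K + a - b)).sum := by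
  rw [Nat.add_sub_assoc hba.le, sum_digits_pow_mul_add hp K (by omega)]
  have := sum_digits_pos (p := p) (n := a - b) (by omega)
  omega

theorem sum_digits_le_sum_digits_pow_mul_add_sub (hp : p.Prime) {m a b : ℕ} (K : ℕ)
    (ha : a < p ^ m) (hb : b < p ^ m) :
    (p.digits K).sum ≤ (p.digits (p ^ m * K + a - b)).sum := by
  rcases le_or_gt b a with hba | hab
  · rw [Nat.add_sub_assoc hba, sum_digits_pow_mul_add hp.one_lt K (by omega)]
    omega
  rcases K.eq_zero_or_pos with rfl | hK
  · simp
  have hsub : p ^ m * K + a - b = p ^ m * (K - 1) + (p ^ m - (b - a)) := by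
    have : p ^ m ≤ p ^ m * K := Nat.le_mul_of_pos_right _ hK
    rw [Nat.mul_sub_one]
    omega
  rw [hsub, sum_digits_pow_mul_add hp.one_lt _ (by omega)]
  have := sum_digits_pos (p := p) (n := p ^ m - (b - a)) (by omega)
  have := sum_digits_le_sum_digits_sub_one_add_one hp K
  omega

theorem sum_digits_sum_pow (hp : 1 < p) (S : Finset ℕ) :
    (p.digits (∑ k ∈ S, p ^ k)).sum = #S := by
  induction S using Finset.induction_on_max with
  | empty => simp
  | insert a S ha ih =>
    have haS : a ∉ S := fun h => lt_irrefl a (ha a h)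
    rw [sum_insert haS, card_insert_of_notMem haS, ← mul_one (p ^ a),
      sum_digits_pow_mul_add hp 1 (Nat.geomSum_lt hp ha), ih,
      Nat.digits_of_lt p 1 one_ne_zero hp]
    simp [add_comm]

theorem card_le_sum_digits_sum_pow_sub_pow (hp : p.Prime) {S : Finset ℕ} {n : ℕ} (hn : n ∉ S)
    (hle : p ^ n ≤ ∑ k ∈ S, p ^ k) : #S ≤ (p.digits (∑ k ∈ S, p ^ k - p ^ n)).sum := by
  set q := ∑ k ∈ S with n < k, p ^ (k - (n + 1))
  set r := ∑ k ∈ S with k < n, p ^ k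
  have hr : r < p ^ n := Nat.geomSum_lt hp.two_le fun k hk => (mem_filter.mp hk).2
  have hsplit : ∑ k ∈ S, p ^ k = p ^ n * (p * q) + r := by
    have hhigh : p ^ n * (p * q) = ∑ k ∈ S with n < k, p ^ k := by
      rw [← mul_assoc, ← pow_succ, mul_sum]
      refine sum_congr rfl fun k hk => ?_
      rw [← pow_add, Nat.add_sub_cancel' (mem_filter.mp hk).2]
    have hlow : r = ∑ k ∈ S with ¬n < k, p ^ k :=
      sum_congr (filter_congr fun k hk => by
        have : k ≠ n := fun h => hn (h ▸ hk)
        omega) fun _ _ => rfl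
    rw [hhigh, hlow, sum_filter_add_sum_filter_not]
  have hq : q ≠ 0 := by
    rintro hq
    rw [hsplit, hq] at hle
    omega
  rw [← sum_digits_sum_pow hp.one_lt S, hsplit]
  exact sum_digits_le_sum_digits_sub_pow hp hq hr

end Digits

theorem coeff_Phi (p m : ℕ) :
    coeff m (Phi p) = if ∃ n : ℕ, m = p ^ n then 1 else 0 := by
  simp [Phi]

theorem coeff_Phi_mul {p : ℕ} (hp : 1 < p) (f : PowerSeries ℤ) (N : ℕ) :
    coeff N (Phi p * f) = ∑ n ∈ range (N + 1) with p ^ n ≤ N, coeff (N - p ^ n) f := by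
  have hinj : Set.InjOn (fun n => (p ^ n, N - p ^ n))
      ↑(filter (fun n => p ^ n ≤ N) (range (N + 1))) := fun a _ b _ h =>
    Nat.pow_right_injective hp (Prod.ext_iff.mp h).1
  rw [coeff_mul, ← sum_subset (s₁ := (filter (fun n => p ^ n ≤ N) (range (N + 1))).image
    fun n => (p ^ n, N - p ^ n)), sum_image hinj]
  · refine sum_congr rfl fun n _ => ?_
    simp [coeff_Phi]
  · intro x hx
    obtain ⟨n, hn, rfl⟩ := mem_image.mp hx
    simp [(mem_filter.mp hn).2]
  · rintro ⟨u, v⟩ huv hx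
    rw [coeff_Phi, if_neg, zero_mul]
    rintro ⟨n, rfl⟩
    rw [HasAntidiagonal.mem_antidiagonal] at huv
    refine hx (mem_image.mpr ⟨n, mem_filter.mpr ⟨mem_range.mpr ?_, by omega⟩, by simp; omega⟩)
    have := Nat.lt_pow_self (n := n) hp
    omega

theorem coeff_Phi_pow_eq_zero {p : ℕ} (hp : p.Prime) {j M : ℕ}
    (h : j < (p.digits M).sum) : coeff M (Phi p ^ j) = 0 := by
  induction j generalizing M with
  | zero =>
    have hM : M ≠ 0 := by rintro rfl; simp at h
    simp [coeff_one, hM]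
  | succ j ih =>
    rw [pow_succ', coeff_Phi_mul hp.one_lt]
    refine sum_eq_zero fun n hn => ih ?_
    have := sum_digits_add_le hp (M - p ^ n) (p ^ n)
    rw [Nat.sub_add_cancel (mem_filter.mp hn).2, sum_digits_pow hp.one_lt] at this
    omega

theorem coeff_Phi_pow_sum_pow {p : ℕ} (hp : p.Prime) (S : Finset ℕ) :
    coeff (∑ k ∈ S, p ^ k) (Phi p ^ #S) = (#S)! := by
  induction h : #S generalizing S with
  | zero => simp_all
  | succ c ih =>
    set N := ∑ k ∈ S, p ^ k with hN
    have hle : ∀ n ∈ S, p ^ n ≤ N := fun n hn =>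
      single_le_sum (f := (p ^ ·)) (fun _ _ => Nat.zero_le _) hn
    have hsub : S ⊆ {n ∈ range (N + 1) | p ^ n ≤ N} := fun n hn =>
      mem_filter.mpr ⟨mem_range.mpr (Nat.lt_succ_of_lt
        ((Nat.lt_pow_self hp.one_lt).trans_le (hle n hn))), hle n hn⟩
    rw [pow_succ', coeff_Phi_mul hp.one_lt, ← sum_subset hsub]
    · have hterm : ∀ n ∈ S, coeff (N - p ^ n) (Phi p ^ c) = (c ! : ℤ) := by
        intro n hn
        rw [hN, ← sum_erase_add S _ hn, Nat.add_sub_cancel, ih (S.erase n) (by simp [hn, h])]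
      rw [sum_congr rfl hterm, sum_const, h, Nat.factorial_succ]
      push_cast
      ring
    · intro n hn hnS
      refine coeff_Phi_pow_eq_zero hp ?_
      have := card_le_sum_digits_sum_pow_sub_pow hp hnS (mem_filter.mp hn).2
      rw [← hN, h] at this
      omega

theorem coeff_evalPhi (p : ℕ) (A : Polynomial (Polynomial ℤ)) (M : ℕ) :
    coeff M (evalPhi p A) = ∑ j ∈ range (A.natDegree + 1), ∑ x ∈ antidiagonal M,
      (A.coeff j).coeff x.1 * coeff x.2 (Phi p ^ j) := by
  simp only [evalPhi, Polynomial.eval₂_eq_sum_range, map_sum, coeff_mul,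
    Polynomial.coeToPowerSeries.ringHom_apply, Polynomial.coeff_coe]

theorem exists_coeff_evalPhi_eq {p : ℕ} (hp : p.Prime) (A : Polynomial (Polynomial ℤ)) :
    ∃ M, coeff M (evalPhi p A) = A.leadingCoeff.leadingCoeff * (A.natDegree ! : ℤ) := by
  set d := A.natDegree
  set i₀ := A.leadingCoeff.natDegree
  set m := (range (d + 1)).sup fun j => (A.coeff j).natDegree
  have hdeg : ∀ j ≤ d, (A.coeff j).natDegree < p ^ m := fun j hj =>
    (le_sup (f := fun j => (A.coeff j).natDegree) (mem_range.mpr (Nat.lt_succ_of_le hj))).trans_lt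
      (Nat.lt_pow_self hp.one_lt)
  have hi₀ : i₀ < p ^ m := hdeg d le_rfl
  set K := ∑ k ∈ range d, p ^ k
  have hK : (p.digits K).sum = d := by simpa using sum_digits_sum_pow hp.one_lt (range d)
  set S := (range d).map (addLeftEmbedding m)
  have hS : ∑ k ∈ S, p ^ k = p ^ m * K := by simp [S, K, mul_sum, pow_add]
  refine ⟨p ^ m * K + i₀, ?_⟩
  have hvanish : ∀ j ≤ d, ∀ u v, u + v = p ^ m * K + i₀ → (j, u) ≠ (d, i₀) →
      (A.coeff j).coeff u * coeff v (Phi p ^ j) = 0 := by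
    intro j hj u v huv hne
    by_cases hu : (A.coeff j).coeff u = 0
    · rw [hu, zero_mul]
    have hu' : u ≤ (A.coeff j).natDegree := Polynomial.le_natDegree_of_ne_zero hu
    have hv : v = p ^ m * K + i₀ - u := by omega
    refine mul_eq_zero_of_right _ (coeff_Phi_pow_eq_zero hp ?_)
    rw [hv]
    rcases hj.lt_or_eq with hj | rfl
    · have hlt := sum_digits_le_sum_digits_pow_mul_add_sub hp K hi₀
        (hu'.trans_lt (hdeg j hj.le))
      omega
    · have hui : u < i₀ := hu'.lt_of_ne fun h => hne (by rw [h]; rfl)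
      have hlt := sum_digits_lt_sum_digits_pow_mul_add_sub hp.one_lt K hui hi₀
      omega
  rw [coeff_evalPhi, sum_eq_single d, sum_eq_single (i₀, p ^ m * K)]
  · have hcard : #S = d := by simp [S]
    have := coeff_Phi_pow_sum_pow hp S
    rw [hcard, hS] at this
    rw [this]
    rfl
  · rintro ⟨u, v⟩ huv hne
    rw [HasAntidiagonal.mem_antidiagonal] at huv
    refine hvanish d le_rfl u v huv fun h => hne ?_
    have hu : u = i₀ := (Prod.ext_iff.mp h).2
    exact Prod.ext hu (by simp only at huv ⊢; omega)
  · exact fun h => absurd (HasAntidiagonal.mem_antidiagonal.mpr (add_comm _ _)) h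
  · intro j hj hjd
    refine sum_eq_zero fun x hx => hvanish j (Nat.le_of_lt_succ (mem_range.mp hj)) x.1 x.2
      (HasAntidiagonal.mem_antidiagonal.mp hx) fun h => hjd (Prod.ext_iff.mp h).1
  · exact fun h => absurd (mem_range.mpr (Nat.lt_succ_self d)) h

theorem stmt_0_general (p : ℕ) (hp : p.Prime) (γ : ℕ) :
    (∀ A : Polynomial (Polynomial ℤ), A.Monic →
        (∀ m : ℕ, (p : ℤ) ^ γ ∣ PowerSeries.coeff m (evalPhi p A)) →
        γ ≤ padicValNat p (Nat.factorial A.natDegree)) ∧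
    (∀ A : Polynomial (Polynomial ℤ), A ≠ 0 → evalPhi p A ≠ 0) := by
  have := Fact.mk hp
  constructor
  · intro A hA hdvd
    obtain ⟨M, hM⟩ := exists_coeff_evalPhi_eq hp A
    rw [hA.leadingCoeff, Polynomial.leadingCoeff_one, one_mul] at hM
    have h := hdvd M
    rw [hM] at h
    exact (padicValNat_dvd_iff_le (Nat.factorial_ne_zero _)).mp (mod_cast h)
  · intro A hA h0
    obtain ⟨M, hM⟩ := exists_coeff_evalPhi_eq hp A
    rw [h0, map_zero, eq_comm] at hM
    have hlc : A.leadingCoeff.leadingCoeff ≠ 0 := by simpa using hA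
    exact mul_ne_zero hlc (mod_cast Nat.factorial_ne_zero _) hM

/-- If `A(z,t) ∈ ℤ[z][t]` is monic in `t` of `t`-degree `d` and
`A(z, Φ_p(z)) = 0` modulo `p^γ`, then `v_p(d!) ≥ γ`.  In particular,
`Φ_p(z)` is transcendental over `ℤ[z]`. -/
theorem stmt_0 (p : ℕ) (hp : p.Prime) (γ : ℕ) (hγ : 0 < γ) :
    (∀ A : Polynomial (Polynomial ℤ), A.Monic →
        (∀ m : ℕ, (p : ℤ) ^ γ ∣ PowerSeries.coeff m (evalPhi p A)) →
        γ ≤ padicValNat p (Nat.factorial A.natDegree)) ∧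
    (∀ A : Polynomial (Polynomial ℤ), A ≠ 0 → evalPhi p A ≠ 0) :=
  stmt_0_general p hp γ
end

section
/- Let p be a prime, and let d, r, s be positive integers with r ≥ s, and c an integer with |c| ≤ d. Let a_1, a_2, …, a_r and b_1, b_2, …, b_s be integers, none of which is divisible by p, with 1 ≤ a_i ≤ d for 1 ≤ i ≤ r and 1 ≤ b_i ≤ d for 1 ≤ i ≤ s. If a_1 p^{2rd} + a_2 p^{2(r−1)d} + … + a_r p^{2d} = b_1 p^{n_1} + b_2 p^{n_2} + … + b_s p^{n_s} + c for integers n_1 > n_2 > … > n_s ≥ 0, then r = s, c = 0, a_i = b_i for all i, and n_i = 2d(r+1−i) for i = 1, 2, …, r. -/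
/-!
Every window `[2dj - d, 2dj + d)` with `1 ≤ j ≤ r` contains some exponent `n_i`: otherwise,
cutting both sides of the equation at that window, the low part of the difference is positive
and smaller than `p ^ (2dj + d)`, yet divisible by it. The windows are disjoint and `s ≤ r`, so
`r = s` and `n_i` lies in the window around `2d(r - i)`. Then
`t_i = a_i p^{2d(r-i)} - b_i p^{n_i}` is divisible by `p ^ (2d(r-i) - d)`, so
`p ^ d ∣ ∑ t_i = c` and `c = 0`. Once the `t_k` with lower exponents are known to vanish, `t_i`
is minus a sum of terms divisible by `p ^ (2d(r-i) + d)`; as `p` divides neither coefficient and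
`|a_i - b_i| < p ^ d`, this forces `n_i = 2d(r-i)` and `a_i = b_i`.
-/

open Finset

lemma sum_Ico_pow_add_pow_le {p k m : ℕ} (hp : 2 ≤ p) (hkm : k ≤ m) :
    ∑ e ∈ Ico k m, p ^ e + p ^ k ≤ p ^ m := by
  induction m, hkm using Nat.le_induction with
  | base => simp
  | succ m hkm ih =>
    rw [sum_Ico_succ_top hkm, pow_succ]
    nlinarith [Nat.mul_le_mul_left (p ^ m) hp]

lemma sum_mul_pow_add_le {ι : Type*} {s : Finset ι} {x e : ι → ℕ} {p d k m : ℕ}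
    (hp : 2 ≤ p) (hkm : k ≤ m) (he : Set.InjOn e s) (hx : ∀ i ∈ s, x i ≤ d)
    (hem : ∀ i ∈ s, e i ∈ Ico k m) :
    ∑ i ∈ s, x i * p ^ e i + d * p ^ k ≤ d * p ^ m := by
  classical
  calc ∑ i ∈ s, x i * p ^ e i + d * p ^ k ≤ d * (∑ j ∈ s.image e, p ^ j + p ^ k) := by
        rw [mul_add, sum_image he, mul_sum]
        gcongr with i hi
        exact hx i hi
    _ ≤ d * (∑ j ∈ Ico k m, p ^ j + p ^ k) := by
        gcongr
        exact image_subset_iff.mpr hem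
    _ ≤ d * p ^ m := by gcongr; exact sum_Ico_pow_add_pow_le hp hkm

lemma mul_le_pow_self {p d : ℕ} (hp : 2 ≤ p) (hd : 0 < d) : d * p ≤ p ^ d := by
  obtain ⟨d, rfl⟩ := Nat.exists_eq_add_of_lt hd
  rw [pow_succ]
  gcongr
  exact Nat.lt_pow_self (by omega)

lemma eq_and_eq_of_pow_add_dvd {p : ℕ} (hp : p.Prime) {a b : ℤ} (ha : ¬ (p : ℤ) ∣ a)
    (hb : ¬ (p : ℤ) ∣ b) {d : ℕ} (hd : 0 < d) (hab : |a - b| < p ^ d) {k n : ℕ}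
    (h : (p : ℤ) ^ (k + d) ∣ a * p ^ k - b * p ^ n) : n = k ∧ a = b := by
  have hp0 : (p : ℤ) ≠ 0 := by exact_mod_cast hp.ne_zero
  rcases lt_trichotomy n k with hlt | rfl | hgt
  · have hsub : (p : ℤ) ^ (n + 1) ∣ a * p ^ k - b * p ^ n := (pow_dvd_pow _ (by omega)).trans h
    have hbp : (p : ℤ) ^ n * p ∣ p ^ n * b := by
      rw [← pow_succ, mul_comm]
      exact (dvd_sub_right ((pow_dvd_pow _ hlt).mul_left _)).mp hsub
    exact absurd ((mul_dvd_mul_iff_left (pow_ne_zero _ hp0)).mp hbp) hb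
  · refine ⟨rfl, sub_eq_zero.mp (Int.eq_zero_of_abs_lt_dvd ?_ hab)⟩
    rw [← sub_mul, pow_add, mul_comm (a - b)] at h
    exact (mul_dvd_mul_iff_left (pow_ne_zero _ hp0)).mp h
  · have hsub : (p : ℤ) ^ (k + 1) ∣ a * p ^ k - b * p ^ n := (pow_dvd_pow _ (by omega)).trans h
    have hap : (p : ℤ) ^ k * p ∣ p ^ k * a := by
      rw [← pow_succ, mul_comm]
      exact (dvd_sub_left ((pow_dvd_pow _ hgt).mul_left _)).mp hsub
    exact absurd ((mul_dvd_mul_iff_left (pow_ne_zero _ hp0)).mp hap) ha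

lemma eq_zero_of_sum_eq_zero_of_dvd {ι R : Type*} [Fintype ι] [LinearOrder ι] [CommRing R]
    {t D : ι → R} (hsum : ∑ i, t i = 0) (hlt : ∀ k i, k < i → D i ∣ t k)
    (hD : ∀ i, D i ∣ t i → t i = 0) (i : ι) : t i = 0 := by
  induction i using WellFoundedGT.induction with
  | _ i ih =>
  apply hD
  have hrest : D i ∣ ∑ k ∈ univ.erase i, t k := dvd_sum fun k hk => by
    rcases lt_or_gt_of_ne (ne_of_mem_erase hk) with h | h
    · exact hlt k i h
    · rw [ih k h]; exact dvd_zero _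
  have : t i = -∑ k ∈ univ.erase i, t k := by
    rw [← add_sum_erase _ _ (mem_univ i)] at hsum
    linear_combination hsum
  rw [this]
  exact hrest.neg_right

section
variable {p d r s : ℕ} {c : ℤ}

lemma pow_le_sum_of_sub_le {a : Fin r → ℕ} (ha1 : ∀ i, 1 ≤ a i) {j : ℕ} (hj : 1 ≤ j)
    (hjr : j ≤ r) :
    p ^ (2 * d * j) ≤
      ∑ i ∈ univ.filter (fun i : Fin r => r - i ≤ j), a i * p ^ (2 * d * (r - i)) := by
  have hmem : (⟨r - j, by omega⟩ : Fin r) ∈ univ.filter (fun i : Fin r => r - i ≤ j) := by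
    simp only [mem_filter, mem_univ, true_and]; omega
  calc p ^ (2 * d * j) ≤ a ⟨r - j, by omega⟩ * p ^ (2 * d * (r - (r - j))) := by
        rw [Nat.sub_sub_self hjr]; exact Nat.le_mul_of_pos_left _ (ha1 _)
    _ ≤ _ := single_le_sum (f := fun i : Fin r => a i * p ^ (2 * d * (r - i)))
        (fun _ _ => Nat.zero_le _) hmem

lemma sum_of_sub_le_add_lt_pow {a : Fin r → ℕ} (hp : 2 ≤ p) (hd : 0 < d)
    (had : ∀ i, a i ≤ d) (j : ℕ) :
    ∑ i ∈ univ.filter (fun i : Fin r => r - i ≤ j), a i * p ^ (2 * d * (r - i)) + d <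
      p ^ (2 * d * j + d) := by
  have hsum : ∑ i ∈ univ.filter (fun i : Fin r => r - i ≤ j), a i * p ^ (2 * d * (r - i)) +
      d * p ^ 1 ≤ d * p ^ (2 * d * j + 1) := by
    refine sum_mul_pow_add_le hp (by omega) (fun i _ i' _ h => ?_) (fun i _ => had i)
      (fun i hi => ?_)
    · have := Nat.eq_of_mul_eq_mul_left (by omega) h
      omega
    · simp only [mem_filter, mem_univ, true_and] at hi
      have := Nat.mul_le_mul_left (2 * d) (show 1 ≤ r - i by omega)
      have := Nat.mul_le_mul_left (2 * d) hi
      simp only [mem_Ico]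
      omega
  have : d * p ^ (2 * d * j + 1) ≤ p ^ (2 * d * j + d) := by
    rw [pow_succ, mul_comm _ p, ← mul_assoc, pow_add, mul_comm (p ^ _)]
    exact Nat.mul_le_mul_right _ (mul_le_pow_self hp hd)
  have : d < d * p ^ 1 := by rw [pow_one]; nlinarith
  omega

lemma exists_exponent_near {a : Fin r → ℕ} {b n : Fin s → ℕ} (hp : 2 ≤ p) (hd : 0 < d)
    (hc : |c| ≤ d) (ha1 : ∀ i, 1 ≤ a i) (had : ∀ i, a i ≤ d) (hbd : ∀ i, b i ≤ d)
    (hn : Function.Injective n)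
    (heq : (∑ i : Fin r, (a i : ℤ) * (p : ℤ) ^ (2 * d * (r - (i : ℕ)))) =
      (∑ i : Fin s, (b i : ℤ) * (p : ℤ) ^ (n i)) + c)
    {j : ℕ} (hj : 1 ≤ j) (hjr : j ≤ r) :
    ∃ i, 2 * d * j ≤ n i + d ∧ n i < 2 * d * j + d := by
  by_contra! hgap
  set lowA := ∑ i ∈ univ.filter (fun i : Fin r => r - i ≤ j), a i * p ^ (2 * d * (r - i))
  set highA := ∑ i ∈ univ.filter (fun i : Fin r => ¬ r - i ≤ j), a i * p ^ (2 * d * (r - i))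
  set lowB := ∑ i ∈ univ.filter (fun i : Fin s => n i + d < 2 * d * j), b i * p ^ n i
  set highB := ∑ i ∈ univ.filter (fun i : Fin s => ¬ n i + d < 2 * d * j), b i * p ^ n i
  have hsplit : (lowA : ℤ) - lowB - c = highB - highA := by
    rw [← sum_filter_add_sum_filter_not univ (fun i : Fin r => r - i ≤ j),
      ← sum_filter_add_sum_filter_not univ (fun i : Fin s => n i + d < 2 * d * j)] at heq
    push_cast [lowA, highA, lowB, highB]
    linear_combination heq
  have hdvd : (p : ℤ) ^ (2 * d * j + d) ∣ highB - highA := by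
    refine dvd_sub (Int.natCast_dvd_natCast.mpr (dvd_sum fun i hi => ?_))
      (Int.natCast_dvd_natCast.mpr (dvd_sum fun i hi => ?_)) <;>
    refine (pow_dvd_pow p ?_).mul_left _ <;> simp only [mem_filter, mem_univ, true_and] at hi
    · exact hgap i (by omega)
    · have := Nat.mul_le_mul_left (2 * d) (show j + 1 ≤ r - i by omega)
      rw [mul_add_one] at this
      omega
  have hlowB : lowB + d * p ^ 0 ≤ d * p ^ (2 * d * j - d) :=
    sum_mul_pow_add_le hp (Nat.zero_le _) (fun i _ i' _ h => hn h) (fun i _ => hbd i)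
      (fun i hi => by simp only [mem_filter, mem_univ, true_and] at hi; simp only [mem_Ico]; omega)
  have hpos : lowB + d < lowA := by
    have : p ^ (2 * d * j) = p ^ d * p ^ (2 * d * j - d) := by
      rw [← pow_add]; congr 1
      have := Nat.mul_le_mul_left (2 * d) hj
      omega
    have : d * p ^ (2 * d * j - d) < p ^ d * p ^ (2 * d * j - d) :=
      Nat.mul_lt_mul_of_pos_right (Nat.lt_pow_self (by omega)) (by positivity)
    have := pow_le_sum_of_sub_le (p := p) (d := d) ha1 hj hjr
    rw [pow_zero, mul_one] at hlowB
    omega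
  have hlt : (lowA : ℤ) + d < p ^ (2 * d * j + d) := by
    exact_mod_cast sum_of_sub_le_add_lt_pow hp hd had j
  have hcd := abs_le.mp hc
  have := Int.le_of_dvd (by omega) (hsplit ▸ hdvd)
  omega

lemma card_eq_and_exponent_near {n : Fin s → ℕ} (hrs : s ≤ r) (hn : StrictAnti n)
    (hwin : ∀ j, 1 ≤ j → j ≤ r → ∃ i, 2 * d * j ≤ n i + d ∧ n i < 2 * d * j + d) :
    r = s ∧ ∀ i : Fin s, 2 * d * (r - i) ≤ n i + d ∧ n i < 2 * d * (r - i) + d := by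
  choose f hf using fun i : Fin r => hwin (r - i) (by omega) (by omega)
  have hmono : StrictMono f := fun i i' hii' => hn.lt_iff_gt.mp <| by
    have : 2 * d * (r - i' + 1) ≤ 2 * d * (r - i) := Nat.mul_le_mul_left _ (by omega)
    linarith [hf i, hf i']
  obtain rfl : r = s := le_antisymm (Fin.le_of_injective f hmono.injective) hrs
  refine ⟨rfl, fun i => ?_⟩
  simpa only [hmono.apply_eq] using hf i

lemma coeff_eq_of_exponent_near (hp : p.Prime) (hd : 0 < d) (hc : |c| ≤ d)
    {a b n : Fin r → ℕ} (had : ∀ i, a i ≤ d) (hap : ∀ i, ¬ p ∣ a i)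
    (hbd : ∀ i, b i ≤ d) (hbp : ∀ i, ¬ p ∣ b i)
    (hwin : ∀ i : Fin r, 2 * d * (r - i) ≤ n i + d)
    (heq : (∑ i : Fin r, (a i : ℤ) * (p : ℤ) ^ (2 * d * (r - (i : ℕ)))) =
      (∑ i : Fin r, (b i : ℤ) * (p : ℤ) ^ (n i)) + c) :
    c = 0 ∧ ∀ i, n i = 2 * d * (r - i) ∧ a i = b i := by
  set t : Fin r → ℤ := fun i => a i * p ^ (2 * d * (r - i)) - b i * p ^ n i
  have hsum : ∑ i, t i = c := by
    simp only [t, sum_sub_distrib, heq]; ring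
  have hpd : (d : ℤ) < p ^ d := by exact_mod_cast Nat.lt_pow_self hp.one_lt
  have hdvd (i : Fin r) : (p : ℤ) ^ (2 * d * (r - i) - d) ∣ t i :=
    dvd_sub ((pow_dvd_pow _ (Nat.sub_le _ _)).mul_left _)
      ((pow_dvd_pow _ (by have := hwin i; omega)).mul_left _)
  have hsingle (i : Fin r) (h : (p : ℤ) ^ (2 * d * (r - i) + d) ∣ t i) :
      n i = 2 * d * (r - i) ∧ a i = b i := by
    have := had i; have := hbd i
    obtain ⟨hn, hab⟩ := eq_and_eq_of_pow_add_dvd hp (mt Int.natCast_dvd_natCast.mp (hap i))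
      (mt Int.natCast_dvd_natCast.mp (hbp i)) hd (abs_sub_lt_iff.mpr ⟨by omega, by omega⟩) h
    exact ⟨hn, by exact_mod_cast hab⟩
  have hc0 : c = 0 := by
    refine Int.eq_zero_of_abs_lt_dvd (hsum ▸ dvd_sum fun i _ => ?_) (hc.trans_lt hpd)
    have : 2 * d * 1 ≤ 2 * d * (r - i) := Nat.mul_le_mul_left _ (by omega)
    exact (pow_dvd_pow _ (by omega)).trans (hdvd i)
  have ht : ∀ i, t i = 0 := eq_zero_of_sum_eq_zero_of_dvd (hsum.trans hc0)
    (D := fun i => (p : ℤ) ^ (2 * d * (r - i) + d))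
    (fun k i hki => by
      have := Nat.mul_le_mul_left (2 * d) (show r - i + 1 ≤ r - k by omega)
      rw [mul_add_one] at this
      exact (pow_dvd_pow _ (by omega)).trans (hdvd k))
    (fun i h => by obtain ⟨hn, hab⟩ := hsingle i h; simp [t, hn, hab])
  exact ⟨hc0, fun i => hsingle i (by rw [ht i]; exact dvd_zero _)⟩

end

theorem stmt_5_general (p : ℕ) (hp : p.Prime) (d r s : ℕ)
    (hd : 0 < d) (hrs : s ≤ r)
    (c : ℤ) (hc : |c| ≤ (d : ℤ))
    (a : Fin r → ℕ) (b : Fin s → ℕ)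
    (ha1 : ∀ i, 1 ≤ a i) (had : ∀ i, a i ≤ d) (hap : ∀ i, ¬ (p ∣ a i))
    (hbd : ∀ i, b i ≤ d) (hbp : ∀ i, ¬ (p ∣ b i))
    (n : Fin s → ℕ) (hn : StrictAnti n)
    (heq : (∑ i : Fin r, (a i : ℤ) * (p : ℤ) ^ (2 * d * (r - (i : ℕ)))) =
      (∑ i : Fin s, (b i : ℤ) * (p : ℤ) ^ (n i)) + c) :
    r = s ∧ c = 0 ∧ (∀ i : Fin s, a (Fin.castLE hrs i) = b i) ∧
      (∀ i : Fin s, n i = 2 * d * (r - (i : ℕ))) := by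
  obtain ⟨rfl, hnear⟩ := card_eq_and_exponent_near hrs hn fun j hj hjr =>
    exists_exponent_near hp.two_le hd hc ha1 had hbd hn.injective heq hj hjr
  obtain ⟨hc0, hcoeff⟩ :=
    coeff_eq_of_exponent_near hp hd hc had hap hbd hbp (fun i => (hnear i).1) heq
  exact ⟨rfl, hc0, fun i => by simpa using (hcoeff i).2, fun i => (hcoeff i).1⟩

/-- Lemma on the uniqueness of representations of integers as sums of powers of `p`:
if `a_1 p^{2rd} + a_2 p^{2(r−1)d} + … + a_r p^{2d} = b_1 p^{n_1} + … + b_s p^{n_s} + c`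
with `r ≥ s`, `|c| ≤ d`, all `a_i, b_i` in `[1,d]` and not divisible by `p`, and
`n_1 > n_2 > … > n_s ≥ 0`, then `r = s`, `c = 0`, `a_i = b_i` and `n_i = 2d(r+1−i)`.
(Indices here run over `Fin r` resp. `Fin s`, zero-based, so the exponent of the
`i`-th term on the left is `2d(r−i)`.) -/
theorem stmt_5 (p : ℕ) (hp : p.Prime) (d r s : ℕ)
    (hd : 0 < d) (hr : 0 < r) (hs : 0 < s) (hrs : s ≤ r)
    (c : ℤ) (hc : |c| ≤ (d : ℤ))
    (a : Fin r → ℕ) (b : Fin s → ℕ)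
    (ha1 : ∀ i, 1 ≤ a i) (had : ∀ i, a i ≤ d) (hap : ∀ i, ¬ (p ∣ a i))
    (hb1 : ∀ i, 1 ≤ b i) (hbd : ∀ i, b i ≤ d) (hbp : ∀ i, ¬ (p ∣ b i))
    (n : Fin s → ℕ) (hn : StrictAnti n)
    (heq : (∑ i : Fin r, (a i : ℤ) * (p : ℤ) ^ (2 * d * (r - (i : ℕ)))) =
      (∑ i : Fin s, (b i : ℤ) * (p : ℤ) ^ (n i)) + c) :
    r = s ∧ c = 0 ∧ (∀ i : Fin s, a (Fin.castLE hrs i) = b i) ∧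
      (∀ i : Fin s, n i = 2 * d * (r - (i : ℕ))) :=
  stmt_5_general p hp d r s hd hrs c hc a b ha1 had hap hbd hbp n hn heq
end

section
/- Let p be a prime. For any positive integers b_1, b_2, …, b_r, the formal power series H_{b_1,b_2,…,b_r}(z) can be expressed as a linear combination, with coefficients in ℤ[z], of the constant series 1 and of series of the form H_{a_1,a_2,…,a_s}(z) in which all a_i are positive integers relatively prime to p, s ≤ r, and a_1 + a_2 + … + a_s ≤ b_1 + b_2 + … + b_r. -/
open PowerSeries

/-- `H_{b_1,…,b_r}(z) = Σ_{n_1 > n_2 > … > n_r ≥ 0} z^{b_1 p^{n_1} + … + b_r p^{n_r}}`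
as a formal power series over `ℤ`. -/
noncomputable def Hser (p : ℕ) {r : ℕ} (b : Fin r → ℕ) : PowerSeries ℤ :=
  PowerSeries.mk fun m =>
    ((Set.ncard {n : Fin r → ℕ | StrictAnti n ∧ ∑ i, b i * p ^ n i = m} : ℕ) : ℤ)

/-!
Shifting an entry `c` of `b` from exponent `n` to exponent `n - 1` turns it into `p c`, and this
matches the terms of `H_{…,a,c,d,…}` with those of `H_{…,a,pc,d,…}` except where the moved exponent
meets a neighbouring one; there two entries merge. Counting these boundary terms gives
`H_{…,a,c,d,…} + H_{…,a+c,d,…} = H_{…,a,pc,d,…} + H_{…,a,pc+d,…}`, together with the variants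
`H_{…,a,c} + H_{…,a+c} = H_{…,a,pc} + z^c H_{…,a}` for a last entry,
`H_{c,d,…} = H_{pc,d,…} + H_{pc+d,…}` for a first entry and `H_c = H_{pc} + z^c`.
Every series other than `H_{…,pc,…}` in these relations has smaller `r + Σ b_i`, so induction on
`r + Σ b_i` removes all entries divisible by `p`.

The relations are proved for the truncations to `n_1 < N`, which obey a polynomial recursion in `N`
and agree with `H_b` modulo `z^{p^N}` when all `b_i` are positive.
-/

open Finset

lemma strictAnti_finCons_iff {α : Type*} [Preorder α] {r : ℕ} {k : α} {n : Fin r → α} :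
    StrictAnti (Fin.cons k n : Fin (r + 1) → α) ↔ (∀ i, n i < k) ∧ StrictAnti n := by
  rcases r with _ | r
  · simp [Subsingleton.strictAnti]
  · rw [← Matrix.vecCons, strictAnti_vecCons]
    exact ⟨fun h => ⟨fun i => (h.2.antitone (Fin.zero_le i)).trans_lt h.1, h.2⟩,
      fun h => ⟨h.1 0, h.2⟩⟩

lemma PowerSeries.eq_of_forall_X_pow_pow_dvd_sub {R : Type*} [CommRing R] {p : ℕ} (hp : 1 < p)
    {f g : PowerSeries R} (h : ∀ N, X ^ p ^ N ∣ f - g) : f = g := by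
  ext m
  simpa [sub_eq_zero] using X_pow_dvd_iff.1 (h m) m (Nat.lt_pow_self hp)

lemma PowerSeries.polynomial_smul_eq_coe_mul {R : Type*} [CommSemiring R] (f : Polynomial R)
    (F : PowerSeries R) : f • F = (f : PowerSeries R) * F :=
  rfl

lemma Hser_congr (p : ℕ) {r r' : ℕ} (h : r = r') {b : Fin r → ℕ} {b' : Fin r' → ℕ}
    (hb : ∀ i, b i = b' (Fin.cast h i)) : Hser p b = Hser p b' := by
  subst h
  congr
  exact funext hb

namespace Hser

variable (p : ℕ)

noncomputable def trunc {r : ℕ} (b : Fin r → ℕ) (N : ℕ) : PowerSeries ℤ :=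
  ∑ n ∈ {n ∈ Fintype.piFinset fun _ : Fin r => range N | StrictAnti n}, X ^ ∑ i, b i * p ^ n i

lemma trunc_elim0 (b : Fin 0 → ℕ) (N : ℕ) : trunc p b N = 1 := by
  simp [trunc, Subsingleton.strictAnti]

lemma trunc_cons {r : ℕ} (x : ℕ) (b : Fin r → ℕ) (N : ℕ) :
    trunc p (Fin.cons x b) N = ∑ k ∈ range N, X ^ (x * p ^ k) * trunc p b k := by
  simp only [trunc, mul_sum, ← pow_add]
  rw [sum_sigma']
  refine sum_bij' (fun n _ => ⟨n 0, Fin.tail n⟩) (fun kn _ => Fin.cons kn.1 kn.2) ?_ ?_ ?_ ?_ ?_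
  · intro n hn
    simp only [mem_filter, Fintype.mem_piFinset, mem_range, mem_sigma] at hn ⊢
    rw [← Fin.cons_self_tail n, strictAnti_finCons_iff] at hn
    simp only [Fin.cons_zero, Fin.forall_fin_succ, Fin.cons_succ] at hn
    exact ⟨hn.1.1, hn.2.1, hn.2.2⟩
  · intro kn hkn
    simp only [mem_filter, Fintype.mem_piFinset, mem_range, mem_sigma] at hkn ⊢
    rw [strictAnti_finCons_iff]
    exact ⟨Fin.cases hkn.1 fun i => (hkn.2.1 i).trans hkn.1, hkn.2.1, hkn.2.2⟩
  · intro n _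
    simp
  · intro n _
    simp
  · intro n _
    simp [Fin.sum_univ_succ, Fin.tail]

lemma coeff_trunc {r : ℕ} (b : Fin r → ℕ) (N m : ℕ) :
    coeff m (trunc p b N) =
      #{n ∈ Fintype.piFinset fun _ : Fin r => range N | StrictAnti n ∧ ∑ i, b i * p ^ n i = m} := by
  simp [trunc, coeff_X_pow, filter_filter, eq_comm]

lemma X_pow_dvd_sub_trunc (hp : 1 < p) {r : ℕ} {b : Fin r → ℕ} (hb : ∀ i, 0 < b i) {N M : ℕ}
    (hNM : N ≤ M) : X ^ p ^ N ∣ Hser p b - trunc p b M := by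
  rw [X_pow_dvd_iff]
  intro m hm
  rw [map_sub, sub_eq_zero, coeff_trunc, Hser, coeff_mk, ← Set.ncard_coe_finset]
  congr 2
  ext n
  simp only [Set.mem_ofPred_eq, coe_filter, Fintype.mem_piFinset, mem_range]
  refine ⟨fun h => ⟨fun i => ?_, h⟩, fun h => h.2⟩
  have : p ^ n i < p ^ M := calc
    p ^ n i ≤ b i * p ^ n i := Nat.le_mul_of_pos_left _ (hb i)
    _ ≤ ∑ j, b j * p ^ n j :=
      single_le_sum (f := fun j => b j * p ^ n j) (fun j _ => Nat.zero_le _) (mem_univ i)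
    _ < p ^ M := h.2 ▸ hm.trans_le (Nat.pow_le_pow_right (by omega) hNM)
  exact (Nat.pow_lt_pow_iff_right (by omega)).1 this

noncomputable def ofList (L : List ℕ) : PowerSeries ℤ :=
  Hser p fun i : Fin L.length => L[i]

noncomputable def truncList (L : List ℕ) (N : ℕ) : PowerSeries ℤ :=
  trunc p (fun i : Fin L.length => L[i]) N

lemma ofList_ofFn {r : ℕ} (b : Fin r → ℕ) : ofList p (List.ofFn b) = Hser p b :=
  Hser_congr p List.length_ofFn fun _ => List.getElem_ofFn ..

lemma truncList_nil (N : ℕ) : truncList p [] N = 1 :=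
  trunc_elim0 p _ N

lemma truncList_cons (x : ℕ) (L : List ℕ) (N : ℕ) :
    truncList p (x :: L) N = ∑ k ∈ range N, X ^ (x * p ^ k) * truncList p L k := by
  simp only [truncList, ← trunc_cons]
  congr 1
  funext i
  cases i using Fin.cases <;> rfl

lemma truncList_cons_zero (x : ℕ) (L : List ℕ) : truncList p (x :: L) 0 = 0 := by
  simp [truncList_cons]

lemma truncList_cons_succ (x : ℕ) (L : List ℕ) (N : ℕ) :
    truncList p (x :: L) (N + 1) = truncList p (x :: L) N + X ^ (x * p ^ N) * truncList p L N := by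
  rw [truncList_cons, truncList_cons, sum_range_succ]

lemma X_pow_dvd_ofList_sub_truncList (hp : 1 < p) {L : List ℕ} (hL : 0 ∉ L) {N M : ℕ}
    (hNM : N ≤ M) : X ^ p ^ N ∣ ofList p L - truncList p L M :=
  X_pow_dvd_sub_trunc p hp (fun _ => Nat.pos_of_ne_zero fun h => hL (h ▸ List.getElem_mem _)) hNM

lemma ofList_nil (hp : 1 < p) : ofList p [] = 1 :=
  eq_of_forall_X_pow_pow_dvd_sub hp fun N => by
    simpa [truncList_nil] using X_pow_dvd_ofList_sub_truncList p hp List.not_mem_nil le_rfl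

lemma truncList_singleton_succ (c N : ℕ) :
    truncList p [c] (N + 1) = truncList p [p * c] N + X ^ c := by
  simp only [truncList_cons, truncList_nil, mul_one]
  rw [sum_range_succ']
  congr 1
  · exact sum_congr rfl fun k _ => by ring
  · simp

lemma truncList_cons_cons_succ (c d : ℕ) (L : List ℕ) (N : ℕ) :
    truncList p (c :: d :: L) (N + 1)
      = truncList p (p * c :: d :: L) N + truncList p ((p * c + d) :: L) N := by
  rw [truncList_cons, sum_range_succ', truncList_cons_zero, mul_zero, add_zero,
    truncList_cons, truncList_cons, ← sum_add_distrib]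
  refine sum_congr rfl fun k _ => ?_
  rw [truncList_cons_succ]
  ring

lemma truncList_singleton_add (c N : ℕ) :
    truncList p [c] N + X ^ (c * p ^ N) = truncList p [p * c] N + X ^ c := by
  rw [← truncList_singleton_succ, truncList_cons_succ, truncList_nil, mul_one]

lemma truncList_cons_cons_add (c d : ℕ) (L : List ℕ) (N : ℕ) :
    truncList p (c :: d :: L) N + X ^ (c * p ^ N) * truncList p (d :: L) N
      = truncList p (p * c :: d :: L) N + truncList p ((p * c + d) :: L) N := by
  rw [← truncList_cons_cons_succ, truncList_cons_succ]

lemma truncList_pair (a c N : ℕ) :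
    truncList p [a, c] N + truncList p [a + c] N
      = truncList p [a, p * c] N + X ^ c * truncList p [a] N := by
  induction N with
  | zero => simp [truncList_cons_zero]
  | succ N ih =>
    simp only [truncList_cons_succ, truncList_nil]
    linear_combination ih + X ^ (a * p ^ N) * truncList_singleton_add p c N

lemma truncList_triple (a c d : ℕ) (L : List ℕ) (N : ℕ) :
    truncList p (a :: c :: d :: L) N + truncList p ((a + c) :: d :: L) N
      = truncList p (a :: p * c :: d :: L) N + truncList p (a :: (p * c + d) :: L) N := by
  induction N with
  | zero => simp [truncList_cons_zero]
  | succ N ih =>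
    simp only [truncList_cons_succ _ a, truncList_cons_succ _ (a + c)]
    linear_combination ih + X ^ (a * p ^ N) * truncList_cons_cons_add p c d L N

lemma truncList_append_of_forall (F : PowerSeries ℤ) {L₁ L₂ L₃ L₄ : List ℕ}
    (h : ∀ N, truncList p L₁ N + truncList p L₂ N = truncList p L₃ N + F * truncList p L₄ N)
    (q : List ℕ) (N : ℕ) :
    truncList p (q ++ L₁) N + truncList p (q ++ L₂) N
      = truncList p (q ++ L₃) N + F * truncList p (q ++ L₄) N := by
  induction q generalizing N with
  | nil => exact h N
  | cons x q ih =>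
    simp only [List.cons_append, truncList_cons, mul_sum, ← sum_add_distrib]
    refine sum_congr rfl fun k _ => ?_
    linear_combination X ^ (x * p ^ k) * ih k

lemma ofList_add_eq_of_truncList (hp : 1 < p) (F : PowerSeries ℤ) {L₁ L₂ L₃ L₄ : List ℕ}
    (h₁ : 0 ∉ L₁) (h₂ : 0 ∉ L₂) (h₃ : 0 ∉ L₃) (h₄ : 0 ∉ L₄)
    (h : ∀ N, truncList p L₁ N + truncList p L₂ N = truncList p L₃ N + F * truncList p L₄ N) :
    ofList p L₁ + ofList p L₂ = ofList p L₃ + F * ofList p L₄ := by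
  refine eq_of_forall_X_pow_pow_dvd_sub hp fun N => ?_
  have e : ofList p L₁ + ofList p L₂ - (ofList p L₃ + F * ofList p L₄)
      = (ofList p L₁ - truncList p L₁ N) + (ofList p L₂ - truncList p L₂ N)
        - (ofList p L₃ - truncList p L₃ N) - F * (ofList p L₄ - truncList p L₄ N) := by
    linear_combination h N
  have hdvd := fun {L} (hL : 0 ∉ L) => X_pow_dvd_ofList_sub_truncList p hp hL (le_refl N)
  rw [e]
  exact dvd_sub (dvd_sub (dvd_add (hdvd h₁) (hdvd h₂)) (hdvd h₃)) (Dvd.dvd.mul_left (hdvd h₄) F)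

lemma ofList_append_pair (hp : 1 < p) {q : List ℕ} (hq : 0 ∉ q) {a c : ℕ} (ha : a ≠ 0)
    (hc : c ≠ 0) :
    ofList p (q ++ [a, c]) + ofList p (q ++ [a + c])
      = ofList p (q ++ [a, p * c]) + X ^ c * ofList p (q ++ [a]) :=
  ofList_add_eq_of_truncList p hp _ (by simp [hq]; omega) (by simp [hq]; omega)
    (by simp [hq]; omega) (by simp [hq]; omega)
    (truncList_append_of_forall p _ (truncList_pair p a c) q)

lemma ofList_append_triple (hp : 1 < p) {q L : List ℕ} (hq : 0 ∉ q) (hL : 0 ∉ L) {a c d : ℕ}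
    (ha : a ≠ 0) (hc : c ≠ 0) (hd : d ≠ 0) :
    ofList p (q ++ a :: c :: d :: L) + ofList p (q ++ (a + c) :: d :: L)
      = ofList p (q ++ a :: p * c :: d :: L) + ofList p (q ++ a :: (p * c + d) :: L) := by
  simpa using ofList_add_eq_of_truncList p hp 1 (by simp [hq, hL]; omega)
    (by simp [hq, hL]; omega) (by simp [hq, hL]; omega) (by simp [hq, hL]; omega)
    (by simpa using truncList_append_of_forall p 1 (by simpa using truncList_triple p a c d L) q)

lemma ofList_singleton (hp : 1 < p) {c : ℕ} (hc : c ≠ 0) :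
    ofList p [c] = ofList p [p * c] + X ^ c := by
  refine eq_of_forall_X_pow_pow_dvd_sub hp fun N => ?_
  have e : ofList p [c] - (ofList p [p * c] + X ^ c)
      = (ofList p [c] - truncList p [c] (N + 1)) - (ofList p [p * c] - truncList p [p * c] N) := by
    linear_combination truncList_singleton_succ p c N
  rw [e]
  refine dvd_sub ?_ ?_ <;>
    refine X_pow_dvd_ofList_sub_truncList p hp ?_ (by omega) <;> simp <;> omega

lemma ofList_cons_cons (hp : 1 < p) {c d : ℕ} {L : List ℕ} (hc : c ≠ 0) (hd : d ≠ 0)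
    (hL : 0 ∉ L) :
    ofList p (c :: d :: L) = ofList p (p * c :: d :: L) + ofList p ((p * c + d) :: L) := by
  refine eq_of_forall_X_pow_pow_dvd_sub hp fun N => ?_
  have e : ofList p (c :: d :: L) - (ofList p (p * c :: d :: L) + ofList p ((p * c + d) :: L))
      = (ofList p (c :: d :: L) - truncList p (c :: d :: L) (N + 1))
        - (ofList p (p * c :: d :: L) - truncList p (p * c :: d :: L) N)
        - (ofList p ((p * c + d) :: L) - truncList p ((p * c + d) :: L) N) := by
    linear_combination truncList_cons_cons_succ p c d L N
  rw [e]
  refine dvd_sub (dvd_sub ?_ ?_) ?_ <;>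
    refine X_pow_dvd_ofList_sub_truncList p hp ?_ (by omega) <;> simp [hL] <;> omega

def smallerLists (L : List ℕ) : Set (List ℕ) :=
  {L' | 0 ∉ L' ∧ L'.length ≤ L.length ∧ L'.sum ≤ L.sum ∧ L'.length + L'.sum < L.length + L.sum}

lemma ofList_mem_span_smallerLists (hp : 1 < p) {L : List ℕ} (hL : 0 ∉ L) {c : ℕ}
    (hc : p * c ∈ L) : ofList p L ∈ Submodule.span (Polynomial ℤ) (ofList p '' smallerLists L) := by
  have hc0 : c ≠ 0 := by rintro rfl; exact hL (by simpa using hc)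
  have hpc : 2 * c ≤ p * c := Nat.mul_le_mul_right c hp
  obtain ⟨q, S, rfl⟩ := List.append_of_mem hc
  have hq : 0 ∉ q := fun h => hL (List.mem_append_left _ h)
  have hS : 0 ∉ S := fun h => hL (List.mem_append_right _ (List.mem_cons_of_mem _ h))
  set W := Submodule.span (Polynomial ℤ) (ofList p '' smallerLists (q ++ p * c :: S))
  have mem : ∀ L' ∈ smallerLists (q ++ p * c :: S), ofList p L' ∈ W :=
    fun L' h => Submodule.subset_span ⟨L', h, rfl⟩
  have X_pow_mul_mem : ∀ L' ∈ smallerLists (q ++ p * c :: S), X ^ c * ofList p L' ∈ W :=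
    fun L' h => by
      simpa [polynomial_smul_eq_coe_mul] using W.smul_mem (Polynomial.X ^ c) (mem L' h)
  rcases List.eq_nil_or_concat' q with rfl | ⟨q, a, rfl⟩ <;> rcases S with _ | ⟨d, S⟩
  · have e : ofList p [p * c] = ofList p [c] - X ^ c * ofList p [] := by
      rw [ofList_nil p hp, mul_one, ofList_singleton p hp hc0, add_sub_cancel_right]
    rw [List.nil_append, e]
    refine W.sub_mem (mem _ ?_) (X_pow_mul_mem _ ?_) <;>
      refine ⟨?_, ?_, ?_, ?_⟩ <;> simp <;> omega
  · obtain ⟨hd, hS⟩ : d ≠ 0 ∧ 0 ∉ S := by simpa [eq_comm] using hS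
    rw [List.nil_append, eq_sub_of_add_eq (ofList_cons_cons p hp hc0 hd hS).symm]
    refine W.sub_mem (mem _ ?_) (mem _ ?_) <;>
      refine ⟨?_, ?_, ?_, ?_⟩ <;> simp [hS] <;> omega
  · obtain ⟨hq, ha⟩ : 0 ∉ q ∧ a ≠ 0 := by simpa [eq_comm] using hq
    simp only [List.append_assoc, List.singleton_append] at *
    rw [eq_sub_of_add_eq (ofList_append_pair p hp hq ha hc0).symm]
    refine W.sub_mem (W.add_mem (mem _ ?_) (mem _ ?_)) (X_pow_mul_mem _ ?_) <;>
      refine ⟨?_, ?_, ?_, ?_⟩ <;> simp [hq] <;> omega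
  · obtain ⟨hq, ha⟩ : 0 ∉ q ∧ a ≠ 0 := by simpa [eq_comm] using hq
    obtain ⟨hd, hS⟩ : d ≠ 0 ∧ 0 ∉ S := by simpa [eq_comm] using hS
    simp only [List.append_assoc, List.singleton_append] at *
    rw [eq_sub_of_add_eq (ofList_append_triple p hp hq hS ha hc0 hd).symm]
    refine W.sub_mem (W.add_mem (mem _ ?_) (mem _ ?_)) (mem _ ?_) <;>
      refine ⟨?_, ?_, ?_, ?_⟩ <;> simp [hq, hS] <;> omega

def coprimeLists (r s : ℕ) : Set (List ℕ) :=
  {A | A ≠ [] ∧ A.length ≤ r ∧ A.sum ≤ s ∧ ∀ x ∈ A, 0 < x ∧ x.Coprime p}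

lemma ofList_mem_span_coprimeLists (hp : p.Prime) {r s : ℕ} (L : List ℕ) (hL : 0 ∉ L)
    (hr : L.length ≤ r) (hs : L.sum ≤ s) :
    ofList p L ∈ Submodule.span (Polynomial ℤ) (insert 1 (ofList p '' coprimeLists p r s)) := by
  induction h : L.length + L.sum using Nat.strong_induction_on generalizing L with
  | _ n ih =>
  by_cases hcop : ∀ x ∈ L, x.Coprime p
  · rcases eq_or_ne L [] with rfl | hne
    · rw [ofList_nil p hp.one_lt]
      exact Submodule.subset_span (Set.mem_insert _ _)
    · refine Submodule.subset_span (Set.mem_insert_of_mem _ ⟨L, ⟨hne, hr, hs, fun x hx => ?_⟩, rfl⟩)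
      exact ⟨Nat.pos_of_ne_zero (ne_of_mem_of_not_mem hx hL), hcop x hx⟩
  push Not at hcop
  obtain ⟨x, hx, hxp⟩ := hcop
  obtain ⟨c, rfl⟩ : p ∣ x := by
    by_contra h
    exact hxp (hp.coprime_iff_not_dvd.2 h).symm
  refine Submodule.span_le.2 ?_ (ofList_mem_span_smallerLists p hp.one_lt hL hx)
  rintro _ ⟨L', ⟨hL', hlen, hsum, hlt⟩, rfl⟩
  exact ih _ (h ▸ hlt) L' hL' (hlen.trans hr) (hsum.trans hs) rfl

end Hser

theorem stmt_7_general (p : ℕ) (hp : p.Prime) (r : ℕ)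
    (b : Fin r → ℕ) (hb : ∀ i, 0 < b i) :
    ∃ (M : ℕ) (c₀ : Polynomial ℤ) (s : Fin M → ℕ)
      (a : (i : Fin M) → Fin (s i) → ℕ) (c : Fin M → Polynomial ℤ),
      (∀ i, 0 < s i) ∧
      (∀ i, s i ≤ r) ∧
      (∀ i j, 0 < a i j) ∧
      (∀ i j, Nat.Coprime (a i j) p) ∧
      (∀ i, (∑ j, a i j) ≤ ∑ j, b j) ∧
      Hser p b = (c₀ : PowerSeries ℤ) + ∑ i, (c i : PowerSeries ℤ) * Hser p (a i) := by
  have hb₀ : 0 ∉ List.ofFn b := by simpa [List.mem_ofFn, eq_comm] using fun i => (hb i).ne'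
  have hmem := Hser.ofList_mem_span_coprimeLists p hp (r := r) (s := ∑ j, b j) (List.ofFn b) hb₀
    (by simp) (by simp [List.sum_ofFn])
  rw [Hser.ofList_ofFn, Submodule.mem_span_insert] at hmem
  obtain ⟨c₀, z, hz, hH⟩ := hmem
  obtain ⟨M, c, g, rfl⟩ := Submodule.mem_span_set'.1 hz
  choose A hA hgA using fun i => (g i).2
  refine ⟨M, c₀, fun i => (A i).length, fun i j => (A i)[j], c,
    fun i => List.length_pos_iff.2 (hA i).1, fun i => (hA i).2.1,
    fun i j => ((hA i).2.2.2 _ (List.getElem_mem _)).1,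
    fun i j => ((hA i).2.2.2 _ (List.getElem_mem _)).2,
    fun i => by simpa [Fin.sum_univ_getElem] using (hA i).2.2.1, ?_⟩
  simp only [hH, polynomial_smul_eq_coe_mul, mul_one, ← hgA]
  rfl

/-- For any positive integers `b_1,…,b_r`, the series `H_{b_1,…,b_r}(z)` is a linear
combination, with coefficients in `ℤ[z]`, of `1` and of series `H_{a_1,…,a_s}(z)` in
which all `a_i` are positive integers relatively prime to `p`, `s ≤ r`, and
`a_1 + … + a_s ≤ b_1 + … + b_r`. -/
theorem stmt_7 (p : ℕ) (hp : p.Prime) (r : ℕ) (hr : 0 < r)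
    (b : Fin r → ℕ) (hb : ∀ i, 0 < b i) :
    ∃ (M : ℕ) (c₀ : Polynomial ℤ) (s : Fin M → ℕ)
      (a : (i : Fin M) → Fin (s i) → ℕ) (c : Fin M → Polynomial ℤ),
      (∀ i, 0 < s i) ∧
      (∀ i, s i ≤ r) ∧
      (∀ i j, 0 < a i j) ∧
      (∀ i j, Nat.Coprime (a i j) p) ∧
      (∀ i, (∑ j, a i j) ≤ ∑ j, b j) ∧
      Hser p b = (c₀ : PowerSeries ℤ) + ∑ i, (c i : PowerSeries ℤ) * Hser p (a i) :=
  stmt_7_general p hp r b hb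
end

section
/- Let p be a prime, r ≥ 1, and let b_1, …, b_r and b'_h be positive integers. Then the following identities of formal power series with integer coefficients hold. (1) If 1 < h < r: H_{b_1,…,b_{h−1}, p·b'_h, b_{h+1},…,b_r}(z) = H_{b_1,…,b_{h−1}, b'_h, b_{h+1},…,b_r}(z) + H_{b_1,…,b_{h−2}, b_{h−1}+b'_h, b_{h+1},…,b_r}(z) − H_{b_1,…,b_{h−1}, p·b'_h + b_{h+1}, b_{h+2},…,b_r}(z). (2) If 1 = h < r: H_{p·b'_1, b_2,…,b_r}(z) = H_{b'_1, b_2,…,b_r}(z) − H_{p·b'_1 + b_2, b_3,…,b_r}(z). (3) If 1 < h = r: H_{b_1,…,b_{r−1}, p·b'_r}(z) = H_{b_1,…,b_{r−1}, b'_r}(z) + H_{b_1,…,b_{r−2}, b_{r−1}+b'_r}(z) − z^{b'_r}·H_{b_1,…,b_{r−1}}(z). (4) If 1 = h = r: H_{p·b'_1}(z) = H_{b'_1}(z) − z^{b'_1}. -/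
/-
Let the parameter `b'` sit at position `h`, and count instead the exponent tuples with the
`h`-th inequality weakened to `n_{h-1} ≥ n_h > n_{h+1}`. Splitting by `n_{h-1} > n_h` or
`n_{h-1} = n_h` expresses this count through `H_{…,b_{h-1},b',…}` and
`H_{…,b_{h-1}+b',…}` (the second term is absent for `h = 1`). Writing `n_h = k + 1`, so that
`b' p^{n_h} = (p b') p^k`, and splitting by `k > n_{h+1}` or `k = n_{h+1}` expresses it through
`H_{…,p b',…}` and `H_{…,p b'+b_{h+1},…}`; for `h = r` the second case is `n_h = 0`, which
contributes `z^{b'} H_{b_1,…,b_{r-1}}`. Equating the two expressions gives the identities.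
-/

open PowerSeries

/-- For a list `l = [b_1,…,b_r]`, the series
`H_{b_1,…,b_r}(z) = Σ_{n_1 > n_2 > … > n_r ≥ 0} z^{b_1 p^{n_1} + … + b_r p^{n_r}}`
as a formal power series over `ℤ`. -/
noncomputable def HserL (p : ℕ) (l : List ℕ) : PowerSeries ℤ :=
  PowerSeries.mk fun m =>
    ((Set.ncard {n : Fin l.length → ℕ |
        StrictAnti n ∧ ∑ i, l.get i * p ^ n i = m} : ℕ) : ℤ)

lemma Set.ncard_eq_add_of_encard_eq {α β γ : Type*} {s : Set α} {t₁ : Set β} {t₂ : Set γ}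
    (h : s.encard = t₁.encard + t₂.encard) (h₁ : t₁.Finite) (h₂ : t₂.Finite) :
    s.ncard = t₁.ncard + t₂.ncard := by
  rw [Set.ncard_def, h, ← h₁.cast_ncard_eq, ← h₂.cast_ncard_eq, ← Nat.cast_add, ENat.toNat_natCast]

namespace HserL

variable (p : ℕ)

def weight (l c : List ℕ) : ℕ := (List.zipWith (fun b n => b * p ^ n) l c).sum

@[simp] lemma weight_nil_right (l : List ℕ) : weight p l [] = 0 := by simp [weight]

@[simp] lemma weight_cons (b n : ℕ) (l c : List ℕ) :
    weight p (b :: l) (n :: c) = b * p ^ n + weight p l c := by simp [weight]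

lemma weight_append_cons {u q : List ℕ} (b t : ℕ) (v r : List ℕ) (h : q.length = u.length) :
    weight p (u ++ b :: v) (q ++ t :: r) = weight p u q + b * p ^ t + weight p v r := by
  rw [weight, List.zipWith_append h.symm, List.sum_append, ← weight, ← weight, weight_cons,
    add_assoc]

lemma weight_ofFn (l : List ℕ) (n : Fin l.length → ℕ) :
    weight p l (List.ofFn n) = ∑ i, l.get i * p ^ n i := by
  rw [weight, ← List.sum_ofFn]
  congr 1
  apply List.ext_getElem <;> simp

def solutions (l : List ℕ) (m : ℕ) : Set (List ℕ) :=
  {c | c.length = l.length ∧ c.IsChain (· > ·) ∧ weight p l c = m}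

lemma solutions_eq_image_ofFn (l : List ℕ) (m : ℕ) :
    solutions p l m =
      List.ofFn '' {n : Fin l.length → ℕ | StrictAnti n ∧ ∑ i, l.get i * p ^ n i = m} := by
  ext c
  constructor
  · rintro ⟨hlen, hc, hw⟩
    have hofFn : List.ofFn (fun i : Fin l.length => c.getD i 0) = c := by
      apply List.ext_getElem <;> simp [hlen]
    refine ⟨_, ⟨?_, ?_⟩, hofFn⟩
    · rw [← List.sortedGT_ofFn_iff, hofFn]
      exact List.sortedGT_iff_isChain.2 hc
    · rw [← weight_ofFn, hofFn, hw]
  · rintro ⟨n, ⟨hn, hw⟩, rfl⟩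
    exact ⟨List.length_ofFn, List.sortedGT_iff_isChain.1 (List.sortedGT_ofFn_iff.2 hn),
      by rw [weight_ofFn, hw]⟩

lemma coeff_HserL (l : List ℕ) (m : ℕ) : coeff m (HserL p l) = (solutions p l m).ncard := by
  rw [solutions_eq_image_ofFn, Set.ncard_image_of_injective _ List.ofFn_injective, HserL,
    coeff_mk]

variable {p} in
lemma finite_solutions (hp : 1 < p) {l : List ℕ} (hl : ∀ b ∈ l, 0 < b) (m : ℕ) :
    (solutions p l m).Finite := by
  rw [solutions_eq_image_ofFn]
  refine ((Set.Finite.pi fun _ : Fin l.length => Set.finite_Iic m).subset ?_).image _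
  rintro n ⟨-, hsum⟩ i -
  calc n i ≤ p ^ n i := (Nat.lt_pow_self hp).le
    _ ≤ l.get i * p ^ n i := Nat.le_mul_of_pos_left _ (hl _ (l.get_mem i))
    _ ≤ m := hsum ▸ Finset.single_le_sum (f := fun j => l.get j * p ^ n j)
        (fun j _ => Nat.zero_le _) (Finset.mem_univ i)

def headSucc : List ℕ → ℕ
  | [] => 0
  | z :: _ => z + 1

lemma isChain_cons_iff {t : ℕ} {r : List ℕ} :
    (t :: r).IsChain (· > ·) ↔ r.IsChain (· > ·) ∧ headSucc r ≤ t := by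
  cases r with
  | nil => simp [headSucc]
  | cons z r => simp [headSucc, List.isChain_cons_cons, and_comm]

lemma isChain_append_cons_iff {q r : List ℕ} {t : ℕ} :
    (q ++ t :: r).IsChain (· > ·) ↔
      q.IsChain (· > ·) ∧ (∀ z ∈ q.getLast?, t < z) ∧ r.IsChain (· > ·) ∧ headSucc r ≤ t := by
  rw [List.isChain_append, isChain_cons_iff]
  simp only [List.head?_cons, Option.mem_def, Option.some.injEq, forall_eq', gt_iff_lt]
  tauto

structure ExpSplit where
  pre : List ℕ
  mid : ℕ
  post : List ℕ

def ExpSplit.toList (e : ExpSplit) : List ℕ := e.pre ++ e.mid :: e.post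

-- Exponent lists of `u ++ b :: v`, cut at `b`, where the exponent of `b` may equal the one
-- before it.
def weak (u : List ℕ) (b : ℕ) (v : List ℕ) (m : ℕ) : Set ExpSplit :=
  {⟨q, t, r⟩ | q.length = u.length ∧ r.length = v.length ∧
    q.IsChain (· > ·) ∧ r.IsChain (· > ·) ∧ headSucc r ≤ t ∧
    (∀ z ∈ q.getLast?, t ≤ z) ∧ weight p u q + b * p ^ t + weight p v r = m}

def strict (u : List ℕ) (b : ℕ) (v : List ℕ) (m : ℕ) : Set ExpSplit :=
  {e ∈ weak p u b v m | ∀ z ∈ e.pre.getLast?, e.mid < z}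

lemma encard_strict (u : List ℕ) (b : ℕ) (v : List ℕ) (m : ℕ) :
    (strict p u b v m).encard = (solutions p (u ++ b :: v) m).encard := by
  have hinj : (strict p u b v m).InjOn ExpSplit.toList := by
    rintro ⟨q, t, r⟩ ⟨⟨hq, -⟩, -⟩ ⟨q', t', r'⟩ ⟨⟨hq', -⟩, -⟩ h
    obtain ⟨rfl, h⟩ := List.append_inj h (hq.trans hq'.symm)
    simp_all
  rw [← hinj.encard_image]
  congr 1
  ext c
  constructor
  · rintro ⟨⟨q, t, r⟩, ⟨⟨hq, hr, cq, cr, hlo, -, hw⟩, hlt⟩, rfl⟩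
    exact ⟨by simp [ExpSplit.toList, hq, hr], isChain_append_cons_iff.2 ⟨cq, hlt, cr, hlo⟩,
      by rw [ExpSplit.toList, weight_append_cons p b _ _ _ hq, hw]⟩
  · rintro ⟨hlen, hc, hw⟩
    have hk : u.length < c.length := by simp [hlen]
    obtain ⟨q, t, r, rfl, hq⟩ : ∃ q t r, c = q ++ t :: r ∧ q.length = u.length :=
      ⟨_, _, _, by rw [← List.drop_eq_getElem_cons hk, List.take_append_drop],
        List.length_take_of_le hk.le⟩
    obtain ⟨cq, hlt, cr, hlo⟩ := isChain_append_cons_iff.1 hc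
    refine ⟨⟨q, t, r⟩, ⟨⟨hq, by simpa [hq] using hlen, cq, cr, hlo,
      fun z hz => (hlt z hz).le, ?_⟩, hlt⟩, rfl⟩
    rwa [weight_append_cons p b _ _ _ hq] at hw

lemma encard_weak_eq_strict_add (u : List ℕ) (b : ℕ) (v : List ℕ) (m : ℕ) :
    (weak p u b v m).encard =
      (strict p u b v m).encard + {e ∈ weak p u b v m | e.pre.getLast? = some e.mid}.encard := by
  rw [← Set.encard_sdiff_add_encard_inter (weak p u b v m) {e | e.pre.getLast? = some e.mid}]
  congr 2
  ext e
  refine and_congr_right fun he => ?_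
  have hle : ∀ z ∈ e.pre.getLast?, e.mid ≤ z := he.2.2.2.2.2.1
  cases h : e.pre.getLast? with
  | none => simp [h]
  | some z =>
    have := hle z h
    simp only [h, Set.mem_ofPred_eq, Option.mem_def, Option.some.injEq, forall_eq']
    omega

lemma encard_weak_mid_eq_last (u : List ℕ) (x b : ℕ) (v : List ℕ) (m : ℕ) :
    {e ∈ weak p (u ++ [x]) b v m | e.pre.getLast? = some e.mid}.encard =
      (strict p u (x + b) v m).encard := by
  have hinj : Function.Injective
      fun e : ExpSplit => (⟨e.pre ++ [e.mid], e.mid, e.post⟩ : ExpSplit) := by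
    rintro ⟨q, t, r⟩ ⟨q', t', r'⟩ h
    simp_all
  rw [← hinj.encard_image (strict p u (x + b) v m)]
  congr 1
  ext ⟨q, t, r⟩
  constructor
  · rintro ⟨⟨hq, hr, cq, cr, hlo, -, hw⟩, hlast : q.getLast? = some t⟩
    obtain ⟨q, rfl⟩ := List.getLast?_eq_some_iff.1 hlast
    have hq : q.length = u.length := by simpa using hq
    obtain ⟨cq, hlt, -⟩ := isChain_append_cons_iff.1 cq
    refine ⟨⟨q, t, r⟩, ⟨⟨hq, hr, cq, cr, hlo, fun z hz => (hlt z hz).le, ?_⟩, hlt⟩, rfl⟩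
    rw [weight_append_cons p x t [] [] hq] at hw
    simp only [weight_nil_right, add_zero] at hw ⊢
    linarith [add_mul x b (p ^ t)]
  · rintro ⟨⟨q, t, r⟩, ⟨⟨hq, hr, cq, cr, hlo, -, hw⟩, hlt⟩, h⟩
    obtain ⟨rfl, rfl, rfl⟩ := ExpSplit.mk.inj h
    refine ⟨⟨by simpa using hq, hr, isChain_append_cons_iff.2 ⟨cq, hlt, List.isChain_nil,
      Nat.zero_le _⟩, cr, hlo, by simp, ?_⟩, List.getLast?_concat⟩
    simp only [weight_append_cons p x t [] [] hq, weight_nil_right, add_zero]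
    linarith [add_mul x b (p ^ t)]

lemma encard_weak_eq_strict_mul_add (u : List ℕ) (b : ℕ) (v : List ℕ) (m : ℕ) :
    (weak p u b v m).encard =
      (strict p u (p * b) v m).encard + {e ∈ weak p u b v m | e.mid = headSucc e.post}.encard := by
  have hinj : Function.Injective fun e : ExpSplit => (⟨e.pre, e.mid + 1, e.post⟩ : ExpSplit) := by
    rintro ⟨q, t, r⟩ ⟨q', t', r'⟩ h
    simp_all
  rw [← Set.encard_sdiff_add_encard_inter (weak p u b v m) {e | e.mid = headSucc e.post},
    ← hinj.encard_image (strict p u (p * b) v m)]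
  congr 2
  ext ⟨q, t, r⟩
  constructor
  · rintro ⟨⟨hq, hr, cq, cr, hlo, hup, hw⟩, htight : t ≠ headSucc r⟩
    obtain ⟨s, rfl⟩ : ∃ s, t = s + 1 := ⟨t - 1, by omega⟩
    refine ⟨⟨q, s, r⟩, ⟨⟨hq, hr, cq, cr, by omega, fun z hz => (hup z hz).trans' (by omega), ?_⟩,
      fun z hz => hup z hz⟩, rfl⟩
    rw [← hw, pow_succ]
    ring
  · rintro ⟨⟨q, s, r⟩, ⟨⟨hq, hr, cq, cr, hlo, -, hw⟩, hlt⟩, h⟩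
    obtain ⟨rfl, rfl, rfl⟩ := ExpSplit.mk.inj h
    refine ⟨⟨hq, hr, cq, cr, Nat.le_succ_of_le hlo, hlt, ?_⟩,
      fun h : s + 1 = headSucc r => by omega⟩
    rw [← hw, pow_succ]
    ring

lemma encard_weak_mid_eq_headSucc_cons (u : List ℕ) (b w : ℕ) (v : List ℕ) (m : ℕ) :
    {e ∈ weak p u b (w :: v) m | e.mid = headSucc e.post}.encard =
      (strict p u (p * b + w) v m).encard := by
  have hinj : Function.Injective
      fun e : ExpSplit => (⟨e.pre, e.mid + 1, e.mid :: e.post⟩ : ExpSplit) := by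
    rintro ⟨q, t, r⟩ ⟨q', t', r'⟩ h
    simp_all
  rw [← hinj.encard_image (strict p u (p * b + w) v m)]
  congr 1
  ext ⟨q, t, r⟩
  constructor
  · rintro ⟨⟨hq, hr, cq, cr, hlo, hup, hw⟩, htight : t = headSucc r⟩
    obtain ⟨s, r, rfl⟩ := List.exists_cons_of_length_eq_add_one hr
    obtain ⟨cr, hs⟩ := isChain_cons_iff.1 cr
    obtain rfl : t = s + 1 := htight
    refine ⟨⟨q, s, r⟩, ⟨⟨hq, by simpa using hr, cq, cr, hs,
      fun z hz => (hup z hz).trans' (by omega), ?_⟩, fun z hz => hup z hz⟩, rfl⟩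
    rw [← hw, weight_cons, pow_succ]
    ring
  · rintro ⟨⟨q, s, r⟩, ⟨⟨hq, hr, cq, cr, hlo, -, hw⟩, hlt⟩, h⟩
    obtain ⟨rfl, rfl, rfl⟩ := ExpSplit.mk.inj h
    refine ⟨⟨hq, by simpa using hr, cq, isChain_cons_iff.2 ⟨cr, hlo⟩, le_rfl, hlt, ?_⟩, rfl⟩
    rw [← hw, weight_cons, pow_succ]
    ring

lemma encard_weak_mid_eq_headSucc_nil (u : List ℕ) (b : ℕ) (m : ℕ) :
    {e ∈ weak p u b [] m | e.mid = headSucc e.post}.encard =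
      {c ∈ solutions p u (m - b) | b ≤ m}.encard := by
  have hinj : Function.Injective fun c : List ℕ => (⟨c, 0, []⟩ : ExpSplit) := by
    intro c c' h
    simp_all
  rw [← hinj.encard_image {c ∈ solutions p u (m - b) | b ≤ m}]
  congr 1
  ext ⟨q, t, r⟩
  constructor
  · rintro ⟨⟨hq, hr, cq, -, -, -, hw⟩, htight : t = headSucc r⟩
    obtain rfl : r = [] := List.eq_nil_of_length_eq_zero hr
    obtain rfl : t = 0 := htight
    simp only [pow_zero, mul_one, weight_nil_right, add_zero] at hw
    exact ⟨q, ⟨⟨hq, cq, by omega⟩, by omega⟩, rfl⟩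
  · rintro ⟨c, ⟨⟨hc, cc, hw⟩, hbm⟩, h⟩
    obtain ⟨rfl, rfl, rfl⟩ := ExpSplit.mk.inj h
    refine ⟨⟨hc, rfl, cc, List.isChain_nil, le_rfl, by simp, ?_⟩, rfl⟩
    simp only [pow_zero, mul_one, weight_nil_right, add_zero]
    omega

noncomputable def weakSeries (u : List ℕ) (b : ℕ) (v : List ℕ) : PowerSeries ℤ :=
  mk fun m => ((weak p u b v m).ncard : ℤ)

lemma weakSeries_nil_left (b : ℕ) (v : List ℕ) : weakSeries p [] b v = HserL p (b :: v) := by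
  ext m
  have hnil : {e ∈ weak p [] b v m | e.pre.getLast? = some e.mid} = ∅ := by
    refine Set.eq_empty_of_forall_notMem ?_
    rintro ⟨q, t, r⟩ ⟨⟨hq, -⟩, hlast : q.getLast? = some t⟩
    simp_all
  rw [weakSeries, coeff_mk, coeff_HserL, Set.ncard_def, Set.ncard_def, encard_weak_eq_strict_add,
    hnil, Set.encard_empty, add_zero, encard_strict, List.nil_append]

variable {p} in
lemma weakSeries_concat (hp : 1 < p) {u : List ℕ} {x b : ℕ} {v : List ℕ}
    (hu : ∀ y ∈ u, 0 < y) (hx : 0 < x) (hb : 0 < b) (hv : ∀ y ∈ v, 0 < y) :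
    weakSeries p (u ++ [x]) b v = HserL p (u ++ [x] ++ b :: v) + HserL p (u ++ (x + b) :: v) := by
  ext m
  have h := encard_weak_eq_strict_add p (u ++ [x]) b v m
  rw [encard_weak_mid_eq_last, encard_strict, encard_strict] at h
  rw [weakSeries, coeff_mk, map_add, coeff_HserL, coeff_HserL, ← Nat.cast_add, Nat.cast_inj]
  refine Set.ncard_eq_add_of_encard_eq h (finite_solutions hp ?_ m) (finite_solutions hp ?_ m) <;>
    grind

variable {p} in
lemma weakSeries_cons (hp : 1 < p) {u : List ℕ} {b w : ℕ} {v : List ℕ}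
    (hu : ∀ y ∈ u, 0 < y) (hb : 0 < b) (hw : 0 < w) (hv : ∀ y ∈ v, 0 < y) :
    weakSeries p u b (w :: v) =
      HserL p (u ++ p * b :: w :: v) + HserL p (u ++ (p * b + w) :: v) := by
  ext m
  have h := encard_weak_eq_strict_mul_add p u b (w :: v) m
  rw [encard_weak_mid_eq_headSucc_cons, encard_strict, encard_strict] at h
  have hpb : 0 < p * b := Nat.mul_pos (by omega) hb
  rw [weakSeries, coeff_mk, map_add, coeff_HserL, coeff_HserL, ← Nat.cast_add, Nat.cast_inj]
  refine Set.ncard_eq_add_of_encard_eq h (finite_solutions hp ?_ m) (finite_solutions hp ?_ m) <;>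
    grind

lemma coeff_X_pow_mul_HserL (u : List ℕ) (b m : ℕ) :
    coeff m (X ^ b * HserL p u) = ({c ∈ solutions p u (m - b) | b ≤ m}.ncard : ℤ) := by
  rw [coeff_X_pow_mul', coeff_HserL]
  split_ifs with h <;> simp [h]

variable {p} in
lemma weakSeries_nil_right (hp : 1 < p) {u : List ℕ} {b : ℕ}
    (hu : ∀ y ∈ u, 0 < y) (hb : 0 < b) :
    weakSeries p u b [] = HserL p (u ++ [p * b]) + X ^ b * HserL p u := by
  ext m
  have h := encard_weak_eq_strict_mul_add p u b [] m
  rw [encard_weak_mid_eq_headSucc_nil, encard_strict] at h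
  have hpb : 0 < p * b := Nat.mul_pos (by omega) hb
  rw [weakSeries, coeff_mk, map_add, coeff_HserL, coeff_X_pow_mul_HserL, ← Nat.cast_add,
    Nat.cast_inj]
  refine Set.ncard_eq_add_of_encard_eq h (finite_solutions hp ?_ m)
    ((finite_solutions hp hu _).sep _)
  grind

lemma HserL_nil : HserL p [] = 1 := by
  ext m
  have h : solutions p [] m = {c | c = [] ∧ m = 0} := by
    ext c
    simp only [solutions, List.length_nil, List.length_eq_zero_iff, Set.mem_ofPred_eq]
    constructor
    · rintro ⟨rfl, -, h⟩
      simp_all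
    · rintro ⟨rfl, rfl⟩
      simp
  rw [coeff_HserL, coeff_one, h]
  split_ifs with hm <;> simp [hm]

end HserL

/-- The four reduction identities of Hou for the series `H_{b_1,…,b_r}(z)`, used to
remove a parameter `p·b'_h` divisible by `p` at position `h`.  Case (1) is `1 < h < r`
(the prefix `b_1,…,b_{h−1}` is written `u₀ ++ [x]` and the suffix `b_{h+1},…,b_r` is
written `w :: v₀`), case (2) is `1 = h < r`, case (3) is `1 < h = r`, and case (4) is
`1 = h = r`. -/
theorem stmt_8 (p : ℕ) (hp : p.Prime) :
    (∀ (u₀ : List ℕ) (x b' w : ℕ) (v₀ : List ℕ),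
        (∀ y ∈ u₀, 0 < y) → 0 < x → 0 < b' → 0 < w → (∀ y ∈ v₀, 0 < y) →
        HserL p (u₀ ++ [x] ++ (p * b') :: w :: v₀) =
          HserL p (u₀ ++ [x] ++ b' :: w :: v₀)
          + HserL p (u₀ ++ (x + b') :: w :: v₀)
          - HserL p (u₀ ++ [x] ++ (p * b' + w) :: v₀)) ∧
    (∀ (b' w : ℕ) (v₀ : List ℕ),
        0 < b' → 0 < w → (∀ y ∈ v₀, 0 < y) →
        HserL p ((p * b') :: w :: v₀) =
          HserL p (b' :: w :: v₀) - HserL p ((p * b' + w) :: v₀)) ∧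
    (∀ (u₀ : List ℕ) (x b' : ℕ),
        (∀ y ∈ u₀, 0 < y) → 0 < x → 0 < b' →
        HserL p (u₀ ++ [x, p * b']) =
          HserL p (u₀ ++ [x, b'])
          + HserL p (u₀ ++ [x + b'])
          - PowerSeries.X ^ b' * HserL p (u₀ ++ [x])) ∧
    (∀ b' : ℕ, 0 < b' →
        HserL p [p * b'] = HserL p [b'] - PowerSeries.X ^ b') := by
  have hp1 := hp.one_lt
  refine ⟨fun u₀ x b' w v₀ hu hx hb hw hv => ?_, fun b' w v₀ hb hw hv => ?_,
    fun u₀ x b' hu hx hb => ?_, fun b' hb => ?_⟩ <;> rw [eq_sub_iff_add_eq]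
  · rw [← HserL.weakSeries_cons hp1 (u := u₀ ++ [x]) (by grind) hb hw hv,
      HserL.weakSeries_concat hp1 hu hx hb (by grind)]
  · simpa using (HserL.weakSeries_cons hp1 (u := []) (by grind) hb hw hv).symm.trans
      (HserL.weakSeries_nil_left p b' (w :: v₀))
  · simpa using (HserL.weakSeries_nil_right hp1 (u := u₀ ++ [x]) (by grind) hb).symm.trans
      (HserL.weakSeries_concat hp1 hu hx hb (by grind))
  · simpa [HserL.HserL_nil] using
      (HserL.weakSeries_nil_right hp1 (u := []) (by grind) hb).symm.trans
        (HserL.weakSeries_nil_left p b' [])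
end

section
/- Let α be a non-negative integer, and let N(z) be the generating function for the numbers of non-crossing connected graphs. Then there exist Laurent polynomials a_0(z), a_1(z), …, a_{3^{α+1}−1}(z) with integer coefficients such that N(z) = Σ_{i=0}^{3^{α+1}−1} a_i(z) · Φ(z)^i modulo 3^{3^α}, where Φ(z) = Σ_{n≥0} z^{3^n}; i.e. the images of the two sides in the ring of formal Laurent series over ℤ/3^{3^α}ℤ are equal. -/
/-!
Modulo 3 the series `Φ` satisfies `Φ³ = Φ - z`: indeed `Φ(z) = z + Φ(z³)`, and cubing is
the Frobenius. Hence `Φ + Φ²` is a root of `P(y) = y³ + y² - 3zy + 2z²` modulo 3, and since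
`P` has only one root of the form `z + O(z²)` over `𝔽₃`, `N ≡ Φ + Φ² (mod 3)`.

Newton's iteration `y ↦ y - P(y)·w`, `w ↦ 2w - P'(y)·w²`, started from `y = Φ + Φ²` and
the approximate inverse `w = z⁻¹(2 + Φ)` of `P'(y)`, doubles the 3-adic precision at each
step and never leaves the ring of polynomials in `Φ` over `ℤ[z, z⁻¹]`; this gives such a
polynomial congruent to `N` modulo `3^k` for every `k`. Finally `Φ³ - Φ + z ≡ 0 (mod 3)`,
so reducing modulo the monic polynomial `(Y³ - Y + z)^k` of degree `3k` does not change the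
value modulo `3^k`.
-/

open PowerSeries
open scoped Classical

/-- `Φ(z) = Σ_{n≥0} z^{3^n}` as a formal power series over `ℤ`. -/
noncomputable def Phi3 : PowerSeries ℤ :=
  PowerSeries.mk fun m => if ∃ n : ℕ, m = 3 ^ n then 1 else 0

section Newton

open Polynomial

variable {R : Type*} [CommRing R] {I : Ideal R}

theorem Polynomial.newton_sub_root_mem_sq {P : R[X]} {n a b : R} (hn : P.eval n = 0)
    (ha : a - n ∈ I) (hb : P.derivative.eval a * b - 1 ∈ I) :
    a - P.eval a * b - n ∈ I ^ 2 := by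
  obtain ⟨k, hk⟩ := P.binomExpansion a (n - a)
  rw [add_sub_cancel, hn] at hk
  have key : a - P.eval a * b - n =
      -((a - n) * (P.derivative.eval a * b - 1)) + (a - n) * (a - n) * (k * b) := by
    linear_combination b * hk
  rw [key, sq]
  exact add_mem (neg_mem (Ideal.mul_mem_mul ha hb))
    (Ideal.mul_mem_right _ _ (Ideal.mul_mem_mul ha ha))

theorem mul_two_sub_mul_sq_sub_one_mem_sq {u b : R} (h : u * b - 1 ∈ I) :
    u * (2 * b - u * b ^ 2) - 1 ∈ I ^ 2 := by
  have key : u * (2 * b - u * b ^ 2) - 1 = -((u * b - 1) * (u * b - 1)) := by ring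
  rw [key, sq]
  exact neg_mem (Ideal.mul_mem_mul h h)

theorem Polynomial.derivative_eval_newton_mul_sub_one_mem {P : R[X]} {n a b : R}
    (hn : P.eval n = 0) (ha : a - n ∈ I) (hb : P.derivative.eval a * b - 1 ∈ I) :
    P.derivative.eval (a - P.eval a * b) * b - 1 ∈ I := by
  have hPa : P.eval a ∈ I := by
    simpa [hn] using I.mem_of_dvd (sub_dvd_eval_sub a n P) ha
  have hder : P.derivative.eval (a - P.eval a * b) - P.derivative.eval a ∈ I :=
    I.mem_of_dvd (sub_dvd_eval_sub _ _ _) (by simpa using I.mul_mem_right b hPa)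
  have key : P.derivative.eval (a - P.eval a * b) * b - 1 =
      (P.derivative.eval (a - P.eval a * b) - P.derivative.eval a) * b +
        (P.derivative.eval a * b - 1) := by ring
  rw [key]
  exact add_mem (I.mul_mem_right b hder) hb

variable {B : Type*} [CommRing B]

theorem Polynomial.exists_sub_root_mem_pow_two_pow (f : B →+* R) (P : B[X]) {n : R}
    (hn : (P.map f).eval n = 0) {a b : B} (ha : f a - n ∈ I)
    (hb : (P.map f).derivative.eval (f a) * f b - 1 ∈ I) (m : ℕ) :
    ∃ a : B, f a - n ∈ I ^ 2 ^ m := by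
  suffices ∀ m : ℕ, ∃ a b : B, f a - n ∈ I ^ 2 ^ m ∧
      (P.map f).derivative.eval (f a) * f b - 1 ∈ I ^ 2 ^ m by
    obtain ⟨a, -, ha, -⟩ := this m
    exact ⟨a, ha⟩
  intro m
  induction m with
  | zero => exact ⟨a, b, by simpa using ha, by simpa using hb⟩
  | succ m ih =>
    obtain ⟨a, b, ha, hb⟩ := ih
    set a' := a - P.eval a * b
    have hfa' : f a' = f a - (P.map f).eval (f a) * f b := by
      simp [a', eval_map]
    refine ⟨a', 2 * b - P.derivative.eval a' * b ^ 2, ?_, ?_⟩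
    · rw [pow_succ, pow_mul, hfa']
      exact newton_sub_root_mem_sq hn ha hb
    · have h := derivative_eval_newton_mul_sub_one_mem hn ha hb
      rw [← hfa'] at h
      rw [pow_succ, pow_mul]
      convert mul_two_sub_mul_sq_sub_one_mem_sq h using 3
      simp [derivative_map, eval_map, map_ofNat f 2]

end Newton

theorem PowerSeries.pow_char_eq_expand (p : ℕ) [Fact p.Prime] (f : PowerSeries (ZMod p)) :
    f ^ p = expand p (NeZero.ne p) f := by
  have h := MvPowerSeries.map_frobenius_expand p (NeZero.ne p) (f := f)
  rw [ZMod.frobenius_zmod, MvPowerSeries.map_id] at h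
  exact h.symm

theorem PowerSeries.natCast_dvd_of_map_eq_zero (p : ℕ) {f : PowerSeries ℤ}
    (hf : map (Int.castRingHom (ZMod p)) f = 0) : (p : PowerSeries ℤ) ∣ f := by
  have hdvd (i : ℕ) : (p : ℤ) ∣ coeff i f := by
    rw [← ZMod.intCast_zmod_eq_zero_iff_dvd, ← eq_intCast (Int.castRingHom (ZMod p)),
      ← coeff_map, hf, map_zero]
  refine ⟨mk fun i => coeff i f / p, ?_⟩
  ext i
  rw [← map_natCast (C (R := ℤ)), coeff_C_mul, coeff_mk, Int.mul_ediv_cancel' (hdvd i)]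

theorem Nat.exists_eq_pow_iff {b : ℕ} (hb : 0 < b) (n : ℕ) :
    (∃ j, n = b ^ j) ↔ n = 1 ∨ b ∣ n ∧ ∃ j, n / b = b ^ j := by
  constructor
  · rintro ⟨_ | j, rfl⟩
    · exact Or.inl rfl
    · refine Or.inr ⟨dvd_pow_self b j.succ_ne_zero, j, ?_⟩
      rw [pow_succ', Nat.mul_div_cancel_left _ hb]
  · rintro (rfl | ⟨hdvd, j, hj⟩)
    · exact ⟨0, rfl⟩
    · exact ⟨j + 1, by rw [pow_succ', ← hj, Nat.mul_div_cancel' hdvd]⟩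

theorem Phi3_eq_X_add_expand : Phi3 = X + expand 3 three_ne_zero Phi3 := by
  ext n
  rw [map_add, coeff_expand, Phi3, coeff_mk, coeff_mk, coeff_X, Nat.exists_eq_pow_iff three_pos]
  by_cases h1 : n = 1
  · subst h1
    norm_num
  · simp [h1, ite_and]

theorem map_Phi3_pow_three :
    map (Int.castRingHom (ZMod 3)) Phi3 ^ 3 = map (Int.castRingHom (ZMod 3)) Phi3 - X := by
  have : Fact (Nat.Prime 3) := ⟨Nat.prime_three⟩
  conv_rhs => rw [Phi3_eq_X_add_expand]
  rw [pow_char_eq_expand, map_add, map_X, map_expand, add_sub_cancel_left]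

theorem three_dvd_Phi3_pow_three_sub_add_X : (3 : PowerSeries ℤ) ∣ Phi3 ^ 3 - Phi3 + X := by
  apply natCast_dvd_of_map_eq_zero 3
  rw [map_add, map_sub, map_pow, map_Phi3_pow_three, map_X, sub_sub_cancel_left, neg_add_cancel]

theorem PowerSeries.coeff_one_mul_of_constantCoeff_eq_zero {R : Type*} [CommSemiring R]
    {f g : PowerSeries R} (hf : constantCoeff f = 0) (hg : constantCoeff g = 0) :
    coeff 1 (f * g) = 0 := by
  simp [coeff_mul, Finset.Nat.antidiagonal_succ, hf, hg]

theorem constantCoeff_Phi3 : constantCoeff Phi3 = 0 := by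
  rw [← coeff_zero_eq_constantCoeff_apply, Phi3, coeff_mk, if_neg]
  rintro ⟨j, hj⟩
  exact (pow_pos three_pos j).ne hj

theorem coeff_one_Phi3 : coeff 1 Phi3 = 1 := by
  rw [Phi3, coeff_mk, if_pos ⟨0, rfl⟩]

-- The cofactor of `n - y` in `P(n) - P(y)` has coefficient `1 + 1 - 3 = -1` at `z`.
theorem PowerSeries.eq_of_cubic_eq_zero {R : Type*} [CommRing R] [IsDomain R]
    {n y : PowerSeries R} (hn0 : constantCoeff n = 0) (hn1 : coeff 1 n = 1)
    (hy0 : constantCoeff y = 0) (hy1 : coeff 1 y = 1)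
    (hn : n ^ 3 + n ^ 2 - 3 * X * n + 2 * X ^ 2 = 0)
    (hy : y ^ 3 + y ^ 2 - 3 * X * y + 2 * X ^ 2 = 0) : n = y := by
  have hc : n ^ 2 + n * y + y ^ 2 + n + y - 3 * X ≠ 0 := by
    intro h
    have h1 : (1 + 1 - 3 : R) = 0 := by
      simpa [sq, coeff_one_mul_of_constantCoeff_eq_zero, hn0, hy0, hn1, hy1, map_ofNat] using
        congrArg (coeff 1) h
    norm_num at h1
  have hfactor : (n - y) * (n ^ 2 + n * y + y ^ 2 + n + y - 3 * X) = 0 := by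
    linear_combination hn - hy
  exact sub_eq_zero.mp ((mul_eq_zero.mp hfactor).resolve_right hc)

theorem cubic_eq_zero_of_pow_three_eq {R : Type*} [CommRing R] (h3 : (3 : R) = 0) {φ x : R}
    (hφ : φ ^ 3 = φ - x) :
    (φ + φ ^ 2) ^ 3 + (φ + φ ^ 2) ^ 2 - 3 * x * (φ + φ ^ 2) + 2 * x ^ 2 = 0 := by
  linear_combination (φ ^ 3 + 3 * φ ^ 2 + 5 * φ + 6 - x) * hφ +
    (2 * φ ^ 2 - 2 * x * φ ^ 2 + 2 * φ - 3 * x * φ + x ^ 2 - 2 * x) * h3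

theorem three_dvd_sub_Phi3_add_sq (N : PowerSeries ℤ) (h0 : coeff 0 N = 0) (h1 : coeff 1 N = 1)
    (heq : N ^ 3 + N ^ 2 - 3 * X * N + 2 * X ^ 2 = 0) :
    (3 : PowerSeries ℤ) ∣ N - (Phi3 + Phi3 ^ 2) := by
  have hφ0 : constantCoeff (map (Int.castRingHom (ZMod 3)) Phi3) = 0 := by
    rw [← coeff_zero_eq_constantCoeff_apply, coeff_map, coeff_zero_eq_constantCoeff_apply,
      constantCoeff_Phi3, map_zero]
  have hφ1 : coeff 1 (map (Int.castRingHom (ZMod 3)) Phi3) = 1 := by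
    rw [coeff_map, coeff_one_Phi3, map_one]
  apply natCast_dvd_of_map_eq_zero 3
  rw [map_sub, sub_eq_zero, map_add, map_pow]
  apply eq_of_cubic_eq_zero
  · rw [← coeff_zero_eq_constantCoeff_apply, coeff_map, h0, map_zero]
  · rw [coeff_map, h1, map_one]
  · simp [sq, hφ0]
  · simp [sq, coeff_one_mul_of_constantCoeff_eq_zero, hφ0, hφ1]
  · simpa only [map_add, map_sub, map_mul, map_pow, map_ofNat, map_X, map_zero] using
      congrArg (map (Int.castRingHom (ZMod 3))) heq
  · refine cubic_eq_zero_of_pow_three_eq ?_ map_Phi3_pow_three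
    rw [← map_ofNat C 3]
    exact (map_eq_zero_iff _ C_injective).mpr rfl

namespace HahnSeries

open scoped Pointwise

variable (Γ R : Type*) [AddCommMonoid Γ] [PartialOrder Γ] [IsOrderedCancelAddMonoid Γ] [Ring R]

-- For `Γ = ℤ`, the Laurent polynomials inside the Laurent series.
def finiteSupportSubring : Subring (HahnSeries Γ R) where
  carrier := {x | x.support.Finite}
  mul_mem' hx hy := (Set.Finite.add hx hy).subset support_mul_subset
  one_mem' := (Set.finite_singleton 0).subset support_single_subset
  add_mem' hx hy := (hx.union hy).subset (support_add_subset _ _)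
  zero_mem' := by simp
  neg_mem' hx := by simpa [support_neg] using hx

variable {Γ R}

theorem single_mem_finiteSupportSubring (a : Γ) (r : R) :
    single a r ∈ finiteSupportSubring Γ R :=
  (Set.finite_singleton a).subset support_single_subset

theorem dvd_coeff_of_C_dvd {r : R} {x : HahnSeries Γ R} (h : C r ∣ x) (a : Γ) :
    r ∣ x.coeff a := by
  obtain ⟨y, rfl⟩ := h
  rw [C_mul_eq_smul, coeff_smul, smul_eq_mul]
  exact dvd_mul_right _ _

end HahnSeries

section Reduction

open Polynomial

variable {A R : Type*} [CommRing A] [CommRing R]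

theorem Polynomial.eval₂_sub_eval₂_modByMonic_pow_mem (f : A →+* R) (x : R) {I : Ideal R}
    {q : A[X]} (hqI : q.eval₂ f x ∈ I) (p : A[X]) (k : ℕ) :
    p.eval₂ f x - (p %ₘ q ^ k).eval₂ f x ∈ I ^ k := by
  have h := congrArg (eval₂ f x) (modByMonic_add_div p (q ^ k))
  rw [eval₂_add, eval₂_mul, eval₂_pow] at h
  rw [← h, add_sub_cancel_left]
  exact (I ^ k).mul_mem_right _ (Ideal.pow_mem_pow hqI k)

theorem Polynomial.natDegree_modByMonic_pow_lt {q : A[X]} (hq : q.Monic)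
    (hq0 : 0 < q.natDegree) (p : A[X]) {k : ℕ} (hk : k ≠ 0) :
    (p %ₘ q ^ k).natDegree < k * q.natDegree := by
  rw [← hq.natDegree_pow]
  refine natDegree_modByMonic_lt p (hq.pow k) fun h => ?_
  have := congrArg natDegree h
  rw [hq.natDegree_pow, natDegree_one, mul_eq_zero] at this
  omega

end Reduction

section NoncrossingGraphs

open HahnSeries

local notation "ι" => ofPowerSeries ℤ ℤ

noncomputable def evalPhi3 : Polynomial (finiteSupportSubring ℤ ℤ) →+* LaurentSeries ℤ :=
  Polynomial.eval₂RingHom (finiteSupportSubring ℤ ℤ).subtype (ι Phi3)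

noncomputable def laurentZ : finiteSupportSubring ℤ ℤ :=
  ⟨single 1 1, single_mem_finiteSupportSubring 1 1⟩

theorem coe_laurentZ : (laurentZ : LaurentSeries ℤ) = single 1 1 := rfl

theorem evalPhi3_C_laurentZ : evalPhi3 (Polynomial.C laurentZ) = ι X := by
  simp [evalPhi3, coe_laurentZ]

theorem ofPowerSeries_Phi3_pow_three : ∃ W, ι Phi3 ^ 3 = ι Phi3 - ι X + 3 * W := by
  obtain ⟨W, hW⟩ := three_dvd_Phi3_pow_three_sub_add_X
  refine ⟨ι W, ?_⟩
  have := congrArg ι hW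
  rw [map_add, map_sub, map_pow, map_mul, map_ofNat] at this
  linear_combination this

-- `(3y² + 2y - 3z)(2 + Φ) ≡ z (mod 3)` at `y = Φ + Φ²`, because `Φ³ ≡ Φ - z`.
theorem derivative_mul_approx_inverse_sub_one_mem :
    (3 * (ι Phi3 + ι Phi3 ^ 2) ^ 2 + 2 * (ι Phi3 + ι Phi3 ^ 2) - 3 * ι X) *
      (single (-1) 1 * (2 + ι Phi3)) - 1 ∈ Ideal.span {(3 : LaurentSeries ℤ)} := by
  obtain ⟨W, hW⟩ := ofPowerSeries_Phi3_pow_three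
  have hzinv : (single (-1) 1 : LaurentSeries ℤ) * ι X = 1 := by
    rw [ofPowerSeries_X, single_mul_single, neg_add_cancel, mul_one, single_zero_one]
  generalize ι Phi3 = φ at hW ⊢
  rw [Ideal.mem_span_singleton']
  refine ⟨single (-1) 1 * (((φ + φ ^ 2) ^ 2 - ι X) * (2 + φ) + 2 * φ + 2 * φ ^ 2 - ι X +
    2 * W), ?_⟩
  linear_combination (-2 * single (-1) (1 : ℤ)) * hW - hzinv

theorem exists_evalPhi3_sub_mem_pow (N : PowerSeries ℤ) (h0 : coeff 0 N = 0)
    (h1 : coeff 1 N = 1) (heq : N ^ 3 + N ^ 2 - 3 * X * N + 2 * X ^ 2 = 0) (k : ℕ) :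
    ∃ p, evalPhi3 p - ι N ∈ Ideal.span {(3 : LaurentSeries ℤ)} ^ k := by
  let Z : Polynomial (finiteSupportSubring ℤ ℤ) := Polynomial.C laurentZ
  let P : Polynomial (Polynomial (finiteSupportSubring ℤ ℤ)) :=
    Polynomial.X ^ 3 + Polynomial.X ^ 2 - Polynomial.C (3 * Z) * Polynomial.X +
      Polynomial.C (2 * Z ^ 2)
  have hPmap : P.map evalPhi3 = Polynomial.X ^ 3 + Polynomial.X ^ 2 -
      Polynomial.C (3 * ι X) * Polynomial.X + Polynomial.C (2 * ι X ^ 2) := by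
    simp only [P, Z, Polynomial.map_add, Polynomial.map_sub, Polynomial.map_mul,
      Polynomial.map_pow, Polynomial.map_X, Polynomial.map_C, Polynomial.map_ofNat, map_mul,
      map_pow, map_ofNat, evalPhi3_C_laurentZ]
  have hroot : (P.map evalPhi3).eval (ι N) = 0 := by
    simpa [hPmap, map_ofNat ι] using congrArg ι heq
  have hy : evalPhi3 (Polynomial.X + Polynomial.X ^ 2) = ι Phi3 + ι Phi3 ^ 2 := by
    simp [evalPhi3]
  have hbase : evalPhi3 (Polynomial.X + Polynomial.X ^ 2) - ι N ∈ Ideal.span {3} := by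
    obtain ⟨c, hc⟩ := three_dvd_sub_Phi3_add_sq N h0 h1 heq
    have hcι : ι N - (ι Phi3 + ι Phi3 ^ 2) = 3 * ι c := by
      simpa [map_ofNat ι] using congrArg ι hc
    rw [Ideal.mem_span_singleton', hy]
    exact ⟨-ι c, by linear_combination hcι⟩
  have hinv : (P.map evalPhi3).derivative.eval (evalPhi3 (Polynomial.X + Polynomial.X ^ 2)) *
      evalPhi3 (Polynomial.C ⟨single (-1) 1, single_mem_finiteSupportSubring (-1) 1⟩ *
        (2 + Polynomial.X)) - 1 ∈ Ideal.span {3} := by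
    convert derivative_mul_approx_inverse_sub_one_mem using 3
    · norm_num [hPmap, hy, Polynomial.derivative_pow]
    · simp [evalPhi3]
  obtain ⟨p, hp⟩ := Polynomial.exists_sub_root_mem_pow_two_pow evalPhi3 P hroot hbase hinv k
  exact ⟨p, Ideal.pow_le_pow_right Nat.lt_two_pow_self.le hp⟩

theorem exists_natDegree_lt_evalPhi3_sub_mem_pow (N : PowerSeries ℤ) (h0 : coeff 0 N = 0)
    (h1 : coeff 1 N = 1) (heq : N ^ 3 + N ^ 2 - 3 * X * N + 2 * X ^ 2 = 0) {k : ℕ}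
    (hk : k ≠ 0) :
    ∃ r : Polynomial (finiteSupportSubring ℤ ℤ), r.natDegree < 3 * k ∧
      ι N - evalPhi3 r ∈ Ideal.span {(3 : LaurentSeries ℤ)} ^ k := by
  obtain ⟨p, hp⟩ := exists_evalPhi3_sub_mem_pow N h0 h1 heq k
  let ρ : Polynomial (finiteSupportSubring ℤ ℤ) :=
    Polynomial.X ^ 3 - Polynomial.X + Polynomial.C laurentZ
  have hρ : ρ.Monic := by simp only [ρ]; monicity!
  have hρdeg : ρ.natDegree = 3 := by simp only [ρ]; compute_degree!
  have hρI : evalPhi3 ρ ∈ Ideal.span {3} := by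
    obtain ⟨W, hW⟩ := three_dvd_Phi3_pow_three_sub_add_X
    have hev : evalPhi3 ρ = ι (Phi3 ^ 3 - Phi3 + X) := by
      simp [ρ, evalPhi3, coe_laurentZ]
    rw [hev, hW, map_mul, map_ofNat, mul_comm]
    exact Ideal.mul_mem_left _ _ (Ideal.mem_span_singleton_self 3)
  refine ⟨p %ₘ ρ ^ k, ?_, ?_⟩
  · simpa [hρdeg, mul_comm] using Polynomial.natDegree_modByMonic_pow_lt hρ (by omega) p hk
  · have hmod : evalPhi3 p - evalPhi3 (p %ₘ ρ ^ k) ∈ Ideal.span {3} ^ k :=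
      Polynomial.eval₂_sub_eval₂_modByMonic_pow_mem _ _ hρI p k
    simpa only [sub_sub_sub_cancel_left] using sub_mem hmod hp

end NoncrossingGraphs

/-- Theorem (non-crossing connected graphs): for every non-negative integer `α`, the
generating function `N(z)` of the numbers of non-crossing connected graphs (the unique
power series with `N_0 = 0`, `N_1 = 1` and `N³ + N² − 3zN + 2z² = 0`) agrees, modulo
`3^{3^α}`, with a polynomial of degree at most `3^{α+1} − 1` in `Φ(z)` whose
coefficients are Laurent polynomials in `z` over `ℤ` (represented here as Laurent
series with finite support). -/
theorem stmt_9 (α : ℕ) (N : PowerSeries ℤ)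
    (h0 : PowerSeries.coeff 0 N = 0)
    (h1 : PowerSeries.coeff 1 N = 1)
    (heq : N ^ 3 + N ^ 2 - 3 * PowerSeries.X * N + 2 * PowerSeries.X ^ 2 = 0) :
    ∃ q : Fin (3 ^ (α + 1)) → LaurentSeries ℤ,
      (∀ i, (q i).support.Finite) ∧
      ∀ m : ℤ, (3 : ℤ) ^ (3 ^ α) ∣
        ((HahnSeries.ofPowerSeries ℤ ℤ) N -
          ∑ i, q i * ((HahnSeries.ofPowerSeries ℤ ℤ) Phi3) ^ (i : ℕ)).coeff m := by
  obtain ⟨r, hdeg, hr⟩ :=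
    exists_natDegree_lt_evalPhi3_sub_mem_pow N h0 h1 heq (pow_ne_zero α three_ne_zero)
  refine ⟨fun i => r.coeff i, fun i => (r.coeff i).2, fun m => ?_⟩
  have hsum : evalPhi3 r = ∑ i : Fin (3 ^ (α + 1)),
      (r.coeff i : LaurentSeries ℤ) * HahnSeries.ofPowerSeries ℤ ℤ Phi3 ^ (i : ℕ) := by
    rw [Fin.sum_univ_eq_sum_range (fun i => (r.coeff i : LaurentSeries ℤ) *
      HahnSeries.ofPowerSeries ℤ ℤ Phi3 ^ i)]
    exact Polynomial.eval₂_eq_sum_range' _ (by rwa [pow_succ, mul_comm]) _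
  rw [Ideal.span_singleton_pow, Ideal.mem_span_singleton, ← map_ofNat HahnSeries.C,
    ← map_pow] at hr
  rw [← hsum]
  exact HahnSeries.dvd_coeff_of_C_dvd hr m
end

section
/- For every integer n ≥ 1, the number K_n of Kreweras walks of length 3n satisfies: K_n ≡ 1 (mod 3) if and only if n = 3^i − 1 for some integer i ≥ 1; K_n ≡ 2 (mod 3) if and only if n = (3^{i_1} + 3^{i_2} − 2)/2 for some integers i_1 > i_2 ≥ 0; and K_n is divisible by 3 in all other cases. -/
/-- The number of Kreweras walks of length `3n`:
`K_n = 4^n/((n+1)(2n+1)) · C(3n,n)`. -/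
def Kreweras (n : ℕ) : ℕ := 4 ^ n * Nat.choose (3 * n) n / ((n + 1) * (2 * n + 1))

/-!
Clearing the (exact) division in `Kreweras` gives `K_n · n! · (2n+2)! = 2 · 4^n · (3n)!`.
Legendre's formula `2 v₃(m!) = m - s₃(m)`, with `s₃` the base-3 digit sum and
`s₃(3n) = s₃(n)`, then yields `2 v₃(K_n) + 2 = s₃(2n+2)`, so `3 ∤ K_n` exactly when `2n+2`
has digit sum 2, i.e. `2n+2 = 2·3^i` or `2n+2 = 3^{i₁} + 3^{i₂}`.

For the residue, the part of `m!` prime to 3 is `≡ (-1)^(v₃(m!) + t(m)) (mod 3)`, where `t(m)`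
counts the digits 2 of `m`; this follows by induction from the same congruence for the part of
`m + 1` prime to 3 with exponent `t(m+1) + t(m) + v₃(m+1)`. Applied to the identity above it
gives `K_n ≡ (-1)^(t(2n+2)+1)` whenever `3 ∤ K_n`: this is `1` for `2·3^i` and `2` for
`3^{i₁} + 3^{i₂}`.
-/

open Nat

lemma digits_three_add_three_mul {r q : ℕ} (hr : r < 3) (h : r ≠ 0 ∨ q ≠ 0) :
    digits 3 (r + 3 * q) = r :: digits 3 q :=
  digits_add 3 (by norm_num) r q hr h

lemma exists_eq_add_three_mul (m : ℕ) : ∃ r q, r < 3 ∧ m = r + 3 * q :=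
  ⟨m % 3, m / 3, m.mod_lt (by norm_num), (m.mod_add_div 3).symm⟩

lemma digits_sum_base_mul {b : ℕ} (hb : 1 < b) (k : ℕ) :
    (digits b (b * k)).sum = (digits b k).sum := by
  rcases k.eq_zero_or_pos with rfl | hk
  · rfl
  · simp [digits_base_mul hb hk]

lemma count_digits_base_mul {b d : ℕ} (hb : 1 < b) (hd : d ≠ 0) (k : ℕ) :
    (digits b (b * k)).count d = (digits b k).count d := by
  rcases k.eq_zero_or_pos with rfl | hk
  · rfl
  · simp [digits_base_mul hb hk, hd.symm]

lemma eq_zero_of_digits_sum_eq_zero {b m : ℕ} (h : (digits b m).sum = 0) : m = 0 := by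
  by_contra hm
  exact getLast_digit_ne_zero b hm (List.sum_eq_zero_iff.mp h _ (List.getLast_mem _))

lemma sub_one_mul_factorization_factorial_add_digits_sum {p : ℕ} (hp : p.Prime) (m : ℕ) :
    (p - 1) * (m !).factorization p + (digits p m).sum = m := by
  have := @sub_one_mul_padicValNat_factorial p ⟨hp⟩ m
  have := digit_sum_le p m
  rw [factorization_def _ hp]
  omega

def unitPartMod3 (m : ℕ) : ZMod 3 := (ordCompl[3] m : ℕ)

lemma unitPartMod3_mul (a b : ℕ) : unitPartMod3 (a * b) = unitPartMod3 a * unitPartMod3 b := by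
  simp [unitPartMod3, ordCompl_mul]

lemma unitPartMod3_of_not_dvd {m : ℕ} (h : ¬ 3 ∣ m) : unitPartMod3 m = (m % 3 : ℕ) := by
  simp [unitPartMod3, factorization_eq_zero_of_not_dvd h]

lemma unitPartMod3_three_mul (k : ℕ) : unitPartMod3 (3 * k) = unitPartMod3 k := by
  rw [unitPartMod3_mul]
  simp [unitPartMod3, Nat.prime_three.factorization_self]

lemma unitPartMod3_succ (m : ℕ) :
    unitPartMod3 (m + 1) =
      (-1) ^ ((digits 3 (m + 1)).count 2 + (digits 3 m).count 2 + (m + 1).factorization 3) := by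
  induction m using Nat.strong_induction_on with
  | _ m ih =>
  obtain ⟨r, q, hr, rfl⟩ := exists_eq_add_three_mul m
  interval_cases r
  · rw [zero_add, show 3 * q + 1 = 1 + 3 * q by ring, unitPartMod3_of_not_dvd (by omega),
      digits_three_add_three_mul (by norm_num) (by simp),
      factorization_eq_zero_of_not_dvd (by omega), show (1 + 3 * q) % 3 = 1 by omega,
      count_digits_base_mul (by norm_num) two_ne_zero]
    simp [← two_mul]
  · rw [show 1 + 3 * q + 1 = 2 + 3 * q by ring, unitPartMod3_of_not_dvd (by omega),
      digits_three_add_three_mul (by norm_num) (by simp),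
      digits_three_add_three_mul (by norm_num) (by simp),
      factorization_eq_zero_of_not_dvd (by omega), show (2 + 3 * q) % 3 = 2 by omega]
    simp
    decide
  · have hfac : (3 * (q + 1)).factorization 3 = (q + 1).factorization 3 + 1 := by
      simp [Nat.factorization_mul, Nat.prime_three.factorization_self, add_comm]
    rw [show 2 + 3 * q + 1 = 3 * (q + 1) by ring, unitPartMod3_three_mul, ih q (by omega), hfac,
      count_digits_base_mul (by norm_num) two_ne_zero,
      digits_three_add_three_mul (by norm_num) (by simp)]
    exact neg_one_pow_congr (by simp [List.count_cons, Nat.even_iff]; omega)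

lemma unitPartMod3_factorial (m : ℕ) :
    unitPartMod3 m ! = (-1) ^ ((digits 3 m).count 2 + (m !).factorization 3) := by
  induction m with
  | zero => simp [unitPartMod3]
  | succ m ih =>
    rw [factorial_succ, unitPartMod3_mul, unitPartMod3_succ, ih, ← pow_add,
      Nat.factorization_mul (add_one_ne_zero m) (factorial_ne_zero m), Finsupp.add_apply]
    exact neg_one_pow_congr (by simp only [Nat.even_iff]; omega)

lemma two_mul_add_one_dvd_choose_three_mul (n : ℕ) : 2 * n + 1 ∣ (3 * n).choose n := by
  rcases n with _ | n
  · simp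
  have h := choose_succ_right_eq (3 * (n + 1)) n
  rw [show 3 * (n + 1) - n = 2 * (n + 1) + 1 by omega] at h
  refine Coprime.dvd_of_dvd_mul_right (show Coprime (2 * (n + 1) + 1) (n + 1) by simp) ?_
  exact ⟨(3 * (n + 1)).choose n, by rw [h, mul_comm]⟩

lemma succ_dvd_two_mul_choose_three_mul (n : ℕ) : n + 1 ∣ 2 * (3 * n).choose n := by
  have h := choose_succ_right_eq (3 * n) n
  rw [show 3 * n - n = 2 * n by omega] at h
  refine Coprime.dvd_of_dvd_mul_right (show Coprime (n + 1) n by simp) ?_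
  exact ⟨(3 * n).choose (n + 1), by rw [mul_comm (n + 1), h]; ring⟩

lemma mul_dvd_four_pow_mul_choose_three_mul (n : ℕ) :
    (n + 1) * (2 * n + 1) ∣ 4 ^ n * (3 * n).choose n := by
  rcases n with _ | n
  · simp
  have hcop : Coprime (n + 1 + 1) (2 * (n + 1) + 1) := by
    rw [show 2 * (n + 1) + 1 = n + 1 + 1 * (n + 1 + 1) by ring]
    simp
  have h := hcop.mul_dvd_of_dvd_of_dvd (succ_dvd_two_mul_choose_three_mul (n + 1))
    ((two_mul_add_one_dvd_choose_three_mul (n + 1)).mul_left 2)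
  exact h.trans ⟨2 * 4 ^ n, by ring⟩

lemma kreweras_mul_factorial_mul_factorial (n : ℕ) :
    Kreweras n * (n ! * (2 * n + 2)!) = 2 * 4 ^ n * (3 * n)! := by
  have hK : Kreweras n * ((n + 1) * (2 * n + 1)) = 4 ^ n * (3 * n).choose n :=
    Nat.div_mul_cancel (mul_dvd_four_pow_mul_choose_three_mul n)
  have hC := choose_mul_factorial_mul_factorial (show n ≤ 3 * n by omega)
  rw [show 3 * n - n = 2 * n by omega] at hC
  calc Kreweras n * (n ! * (2 * n + 2)!)
      = 2 * (Kreweras n * ((n + 1) * (2 * n + 1))) * n ! * (2 * n)! := by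
        simp only [factorial_succ]; ring
    _ = 2 * 4 ^ n * (3 * n)! := by rw [hK, ← hC]; ring

lemma kreweras_ne_zero (n : ℕ) : Kreweras n ≠ 0 := by
  intro h
  have := kreweras_mul_factorial_mul_factorial n
  simp [h, factorial_ne_zero] at this

lemma not_three_dvd_two_mul_four_pow (n : ℕ) : ¬ 3 ∣ 2 * 4 ^ n := by
  simp [Nat.dvd_iff_mod_eq_zero, Nat.mul_mod, Nat.pow_mod]

lemma factorization_kreweras_add (n : ℕ) :
    (Kreweras n).factorization 3 + (n !).factorization 3 + (2 * n + 2)!.factorization 3 =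
      (3 * n)!.factorization 3 := by
  have h := congrArg (·.factorization 3) (kreweras_mul_factorial_mul_factorial n)
  simp only [Nat.factorization_mul (kreweras_ne_zero n) (mul_ne_zero (factorial_ne_zero _)
    (factorial_ne_zero _)), Nat.factorization_mul (factorial_ne_zero _) (factorial_ne_zero _),
    Nat.factorization_mul (by positivity : 2 * 4 ^ n ≠ 0) (factorial_ne_zero _),
    Finsupp.add_apply, factorization_eq_zero_of_not_dvd (not_three_dvd_two_mul_four_pow n)] at h
  omega

lemma unitPartMod3_kreweras_mul (n : ℕ) :
    unitPartMod3 (Kreweras n) * unitPartMod3 n ! * unitPartMod3 (2 * n + 2)! =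
      - unitPartMod3 (3 * n)! := by
  have h := congrArg unitPartMod3 (kreweras_mul_factorial_mul_factorial n)
  rw [unitPartMod3_mul, unitPartMod3_mul, unitPartMod3_mul,
    unitPartMod3_of_not_dvd (not_three_dvd_two_mul_four_pow n), ← mul_assoc] at h
  rw [h, show 2 * 4 ^ n % 3 = 2 by simp [Nat.mul_mod, Nat.pow_mod], Nat.cast_ofNat,
    show (2 : ZMod 3) = -1 by decide, neg_one_mul]

lemma two_mul_factorization_kreweras_add_two (n : ℕ) :
    2 * (Kreweras n).factorization 3 + 2 = (digits 3 (2 * n + 2)).sum := by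
  have := factorization_kreweras_add n
  have := sub_one_mul_factorization_factorial_add_digits_sum prime_three n
  have := sub_one_mul_factorization_factorial_add_digits_sum prime_three (2 * n + 2)
  have := sub_one_mul_factorization_factorial_add_digits_sum prime_three (3 * n)
  rw [digits_sum_base_mul (by norm_num)] at this
  omega

lemma unitPartMod3_kreweras (n : ℕ) :
    unitPartMod3 (Kreweras n) =
      (-1) ^ ((digits 3 (2 * n + 2)).count 2 + (Kreweras n).factorization 3 + 1) := by
  have h := unitPartMod3_kreweras_mul n
  rw [unitPartMod3_factorial, unitPartMod3_factorial, unitPartMod3_factorial,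
    count_digits_base_mul (by norm_num) two_ne_zero, mul_assoc, ← pow_add] at h
  have hv := factorization_kreweras_add n
  set p : ZMod 3 := (-1) ^ ((digits 3 n).count 2 + (n !).factorization 3 +
    ((digits 3 (2 * n + 2)).count 2 + ((2 * n + 2)!).factorization 3)) with hp
  have hpp : p * p = 1 := by rw [← pow_add, ← two_mul, pow_mul]; simp
  calc unitPartMod3 (Kreweras n)
      = unitPartMod3 (Kreweras n) * p * p := by rw [mul_assoc, hpp, mul_one]
    _ = (-1) ^ ((digits 3 n).count 2 + ((3 * n)!).factorization 3 + 1) * p := by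
        rw [h, pow_succ, mul_neg_one]
    _ = _ := by
        rw [hp, ← pow_add]
        exact neg_one_pow_congr (by simp only [Nat.even_iff]; omega)

lemma kreweras_cast_zmod_three_digits (n : ℕ) :
    (Kreweras n : ZMod 3) = if (digits 3 (2 * n + 2)).sum = 2
      then (-1) ^ ((digits 3 (2 * n + 2)).count 2 + 1) else 0 := by
  have hv := two_mul_factorization_kreweras_add_two n
  split_ifs with hs
  · have h0 : (Kreweras n).factorization 3 = 0 := by omega
    have hu := unitPartMod3_kreweras n
    rwa [unitPartMod3, h0, pow_zero, Nat.div_one, add_zero] at hu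
  · rw [ZMod.natCast_eq_zero_iff]
    exact Nat.dvd_of_factorization_pos (by omega)

lemma exists_eq_three_pow_of_digits_sum_eq_one {m : ℕ} (h : (digits 3 m).sum = 1) :
    ∃ i, m = 3 ^ i := by
  induction m using Nat.strong_induction_on with
  | _ m ih =>
  obtain ⟨r, q, hr, rfl⟩ := exists_eq_add_three_mul m
  rcases Nat.eq_zero_or_pos (r + 3 * q) with h0 | h0
  · simp [h0] at h
  rw [digits_three_add_three_mul hr (by omega), List.sum_cons] at h
  interval_cases r
  · obtain ⟨i, rfl⟩ := ih q (by omega) (by omega)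
    exact ⟨i + 1, by ring⟩
  · have hq : q = 0 := eq_zero_of_digits_sum_eq_zero (b := 3) (by omega)
    exact ⟨0, by simp [hq]⟩
  · omega

lemma digits_sum_eq_two_cases {m : ℕ} (h : (digits 3 m).sum = 2) :
    (∃ i, m = 2 * 3 ^ i) ∨ ∃ i j, j < i ∧ m = 3 ^ i + 3 ^ j := by
  induction m using Nat.strong_induction_on with
  | _ m ih =>
  obtain ⟨r, q, hr, rfl⟩ := exists_eq_add_three_mul m
  rcases Nat.eq_zero_or_pos (r + 3 * q) with h0 | h0
  · simp [h0] at h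
  rw [digits_three_add_three_mul hr (by omega), List.sum_cons] at h
  interval_cases r
  · rcases ih q (by omega) (by omega) with ⟨i, rfl⟩ | ⟨i, j, hji, rfl⟩
    · exact .inl ⟨i + 1, by ring⟩
    · exact .inr ⟨i + 1, j + 1, by omega, by ring⟩
  · obtain ⟨i, rfl⟩ := exists_eq_three_pow_of_digits_sum_eq_one (m := q) (by omega)
    exact .inr ⟨i + 1, 0, by omega, by ring⟩
  · have hq : q = 0 := eq_zero_of_digits_sum_eq_zero (b := 3) (by omega)
    exact .inl ⟨0, by simp [hq]⟩

lemma digits_two_mul_three_pow (i : ℕ) : digits 3 (2 * 3 ^ i) = List.replicate i 0 ++ [2] := by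
  rw [mul_comm, digits_base_pow_mul (by norm_num) (by norm_num)]
  simp

lemma digits_three_pow_add_three_pow {i j : ℕ} (hji : j < i) :
    digits 3 (3 ^ i + 3 ^ j) =
      List.replicate j 0 ++ 1 :: (List.replicate (i - j - 1) 0 ++ [1]) := by
  obtain ⟨k, rfl⟩ : ∃ k, i = j + k + 1 := ⟨i - j - 1, by omega⟩
  rw [show 3 ^ (j + k + 1) + 3 ^ j = 3 ^ j * (1 + 3 * (3 ^ k * 1)) by ring,
    digits_base_pow_mul (by norm_num) (by positivity),
    digits_three_add_three_mul (by norm_num) (by simp),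
    digits_base_pow_mul (by norm_num) (by norm_num)]
  simp
  omega

lemma digits_sum_two_mul_three_pow (i : ℕ) : (digits 3 (2 * 3 ^ i)).sum = 2 := by
  rw [digits_two_mul_three_pow]
  simp

lemma count_two_digits_two_mul_three_pow (i : ℕ) : (digits 3 (2 * 3 ^ i)).count 2 = 1 := by
  rw [digits_two_mul_three_pow]
  simp [List.count_replicate]

lemma digits_sum_three_pow_add_three_pow {i j : ℕ} (hji : j < i) :
    (digits 3 (3 ^ i + 3 ^ j)).sum = 2 := by
  rw [digits_three_pow_add_three_pow hji]
  simp

lemma count_two_digits_three_pow_add_three_pow {i j : ℕ} (hji : j < i) :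
    (digits 3 (3 ^ i + 3 ^ j)).count 2 = 0 := by
  rw [digits_three_pow_add_three_pow hji]
  simp [List.count_replicate]

lemma three_pow_add_three_pow_ne_two_mul_three_pow {i j k : ℕ} (hji : j < i) :
    3 ^ i + 3 ^ j ≠ 2 * 3 ^ k := by
  intro h
  have := count_two_digits_three_pow_add_three_pow hji
  rw [h, count_two_digits_two_mul_three_pow] at this
  omega

open Classical in
lemma kreweras_cast_zmod_three (n : ℕ) :
    (Kreweras n : ZMod 3) =
      if ∃ i, 2 * n + 2 = 2 * 3 ^ i then 1
      else if ∃ i j, j < i ∧ 2 * n + 2 = 3 ^ i + 3 ^ j then -1 else 0 := by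
  rw [kreweras_cast_zmod_three_digits]
  by_cases hs : (digits 3 (2 * n + 2)).sum = 2
  · rcases digits_sum_eq_two_cases hs with ⟨i, hi⟩ | ⟨i, j, hji, hij⟩
    · rw [if_pos hs, if_pos ⟨i, hi⟩, hi, count_two_digits_two_mul_three_pow]
      decide
    · have hP1 : ¬ ∃ k, 2 * n + 2 = 2 * 3 ^ k := fun ⟨k, hk⟩ =>
        three_pow_add_three_pow_ne_two_mul_three_pow hji (hij ▸ hk)
      rw [if_pos hs, if_neg hP1, if_pos ⟨i, j, hji, hij⟩, hij,
        count_two_digits_three_pow_add_three_pow hji]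
      simp
  · rw [if_neg hs, if_neg (fun ⟨i, hi⟩ => hs (hi ▸ digits_sum_two_mul_three_pow i)),
      if_neg (fun ⟨i, j, hji, hij⟩ => hs (hij ▸ digits_sum_three_pow_add_three_pow hji))]

/-- For `n ≥ 1`: `K_n ≡ 1 (mod 3)` iff `n = 3^i − 1` for some `i ≥ 1`;
`K_n ≡ 2 (mod 3)` iff `n = (3^{i₁} + 3^{i₂} − 2)/2` for some `i₁ > i₂ ≥ 0`
(equivalently `2n + 2 = 3^{i₁} + 3^{i₂}`); and `3 ∣ K_n` in all other cases. -/
theorem stmt_14 (n : ℕ) (hn : 1 ≤ n) :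
    (Kreweras n ≡ 1 [MOD 3] ↔ ∃ i : ℕ, 1 ≤ i ∧ n + 1 = 3 ^ i) ∧
    (Kreweras n ≡ 2 [MOD 3] ↔ ∃ i1 i2 : ℕ, i2 < i1 ∧ 2 * n + 2 = 3 ^ i1 + 3 ^ i2) ∧
    (¬ (∃ i : ℕ, 1 ≤ i ∧ n + 1 = 3 ^ i) →
      ¬ (∃ i1 i2 : ℕ, i2 < i1 ∧ 2 * n + 2 = 3 ^ i1 + 3 ^ i2) →
      3 ∣ Kreweras n) := by
  have hform : (∃ i : ℕ, 1 ≤ i ∧ n + 1 = 3 ^ i) ↔ ∃ i, 2 * n + 2 = 2 * 3 ^ i :=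
    ⟨fun ⟨i, _, hi⟩ => ⟨i, by omega⟩,
      fun ⟨i, hi⟩ => ⟨i, Nat.one_le_iff_ne_zero.2 (by rintro rfl; omega), by omega⟩⟩
  rw [hform, ← ZMod.natCast_eq_natCast_iff, ← ZMod.natCast_eq_natCast_iff,
    ← ZMod.natCast_eq_zero_iff, kreweras_cast_zmod_three]
  split_ifs with h1 h2
  · refine ⟨iff_of_true rfl h1, iff_of_false (by decide) ?_, fun h _ => absurd h1 h⟩
    rintro ⟨i, j, hji, hij⟩
    obtain ⟨k, hk⟩ := h1
    exact three_pow_add_three_pow_ne_two_mul_three_pow hji (hij ▸ hk)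
  · exact ⟨iff_of_false (by decide) h1, iff_of_true (by decide) h2, fun _ h => absurd h2 h⟩
  · exact ⟨iff_of_false (by decide) h1, iff_of_false (by decide) h2, fun _ _ => rfl⟩
end

section
/- Let p be a prime. The Fuß–Catalan numbers F(n;p) = (1/n)·C(pn, n−1) obey the following congruences modulo p², for n ≥ 1: (i) if n = (p^i − 1)/(p − 1) for some integer i ≥ 1, then F(n;p) ≡ 1 (mod p²); (ii) if n = (a_1 p^{i_1} + a_2 p^{i_2} + … + a_r p^{i_r} − 1)/(p − 1) where r ≥ 2, the a_j are positive integers relatively prime to p with a_1 + a_2 + … + a_r = p, and i_1 > i_2 > … > i_r ≥ 0, then F(n;p) ≡ p!/(a_1!·a_2!·…·a_r!) (mod p²); (iii) in all cases not covered by (i) and (ii), F(n;p) is divisible by p². -/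
/-- The Fuß–Catalan number `F(n;k) = (1/n)·C(kn, n−1)`. -/
def FussCatalan (n k : ℕ) : ℕ := Nat.choose (k * n) (n - 1) / n

/-!
The series `B = ∑ F(n;p) Xⁿ` (with constant term `1`) satisfies `B = 1 + X B ^ p`: the Raney
numbers `x / (x + kp) · C(x + kp, k)` obey a Pascal-type recursion which makes their generating
functions multiplicative in `x`, so these generating functions are the powers `Bˣ`.
Modulo `p`, Frobenius gives `B(X) ^ p = B(X ^ p)`, hence `B ≡ ∑ᵢ X ^ ((pⁱ - 1)/(p - 1))`.
A congruence `B ≡ R` modulo `p` lifts to `B ^ p ≡ R ^ p` modulo `p²`, so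
`F(n;p) = [Xⁿ⁻¹] B ^ p ≡ [Xⁿ⁻¹] (∑ᵢ X ^ ((pⁱ - 1)/(p - 1))) ^ p`, and by the multinomial theorem
this is a sum of multinomial coefficients over the ways to write `n(p - 1) + 1` as a sum of `p`
powers of `p`. Such a sum either consists of `p` equal powers, which happens exactly in case (i),
or is the base-`p` expansion of `n(p - 1) + 1`, whose digits must then add up to `p`: that is
case (ii), and case (iii) is when neither occurs.
-/

open Finset PowerSeries Function

theorem PowerSeries.coeff_pow_expChar {R : Type*} [CommRing R] (p : ℕ) [ExpChar R p]
    (f : R⟦X⟧) (n : ℕ) : coeff n (f ^ p) = if p ∣ n then coeff (n / p) f ^ p else 0 := by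
  have hp : p ≠ 0 := expChar_ne_zero R p
  rw [← MvPowerSeries.map_frobenius_expand p hp (f := f)]
  change coeff n (map (frobenius R p) (expand p hp f)) = _
  rw [coeff_map, coeff_expand]
  split_ifs <;> simp [frobenius_def, hp]

theorem PowerSeries.coeff_pow_eq_of_coeff_eq {R : Type*} [CommRing R] {f g : R⟦X⟧} {N : ℕ}
    (h : ∀ i ≤ N, coeff i f = coeff i g) (m : ℕ) : coeff N (f ^ m) = coeff N (g ^ m) := by
  have htrunc : trunc (N + 1) f = trunc (N + 1) g := by
    ext i
    simp only [coeff_trunc]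
    split_ifs with hi
    · exact h i (Nat.lt_succ_iff.mp hi)
    · rfl
  rw [← coeff_coe_trunc_of_lt N.lt_succ_self, ← trunc_trunc_pow, htrunc, trunc_trunc_pow,
    coeff_coe_trunc_of_lt N.lt_succ_self]

theorem PowerSeries.natCast_dvd_sub_of_map_eq {p : ℕ} {f g : ℤ⟦X⟧}
    (h : map (Int.castRingHom (ZMod p)) f = map (Int.castRingHom (ZMod p)) g) :
    (p : ℤ⟦X⟧) ∣ f - g := by
  have hdvd (n : ℕ) : (p : ℤ) ∣ coeff n (f - g) := by
    rw [← ZMod.intCast_zmod_eq_zero_iff_dvd, map_sub, Int.cast_sub, sub_eq_zero]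
    simpa using congrArg (coeff n) h
  refine ⟨mk fun n => coeff n (f - g) / p, ?_⟩
  ext n
  rw [← map_natCast (C (R := ℤ)), coeff_C_mul, coeff_mk, Int.mul_ediv_cancel' (hdvd n)]

theorem PowerSeries.coeff_sum_X_pow_pow {R ι : Type*} [CommSemiring R] [DecidableEq ι]
    (s : Finset ι) (c : ι → ℕ) (m N : ℕ) :
    coeff N ((∑ i ∈ s, (X : R⟦X⟧) ^ c i) ^ m) =
      ∑ k ∈ s.piAntidiag m with ∑ i ∈ s, k i * c i = N, (Nat.multinomial s k : R) := by
  rw [sum_pow_eq_sum_piAntidiag, map_sum, sum_filter]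
  refine sum_congr rfl fun k _ => ?_
  simp_rw [← pow_mul, prod_pow_eq_pow_sum, ← map_natCast (C (R := R)), coeff_C_mul_X_pow,
    mul_comm (c _), eq_comm]

@[to_additive]
theorem Finset.prod_apply_extend {α ι M : Type*} [CommMonoid M] [Fintype ι] {s : Finset α}
    {e : ι → α} (he : Injective e) (hs : ∀ j, e j ∈ s) (f : ι → ℕ) (G : α → ℕ → M)
    (hG : ∀ i, G i 0 = 1) : ∏ i ∈ s, G i (extend e f 0 i) = ∏ j, G (e j) (f j) := by
  classical
  rw [← prod_subset (image_subset_iff.mpr fun j _ => hs j) fun i _ hi => ?_,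
    prod_image he.injOn]
  · exact prod_congr rfl fun j _ => by rw [he.extend_apply]
  · rw [extend_apply' _ _ _ (by simpa using hi), Pi.zero_apply, hG]

theorem Nat.multinomial_extend {α ι : Type*} [Fintype ι] {s : Finset α} {e : ι → α}
    (he : Injective e) (hs : ∀ j, e j ∈ s) (f : ι → ℕ) :
    Nat.multinomial s (extend e f 0) = Nat.multinomial univ f := by
  simp only [Nat.multinomial]
  rw [sum_apply_extend he hs f (fun _ x => x) fun _ => rfl,
    prod_apply_extend he hs f (fun _ x => x.factorial) fun _ => rfl]

theorem Nat.eqOn_of_sum_range_mul_pow_eq {p B : ℕ} {f g : ℕ → ℕ} (hf : ∀ u, f u < p)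
    (hg : ∀ u, g u < p)
    (h : ∑ u ∈ range B, f u * p ^ u = ∑ u ∈ range B, g u * p ^ u) : ∀ u < B, f u = g u := by
  induction B generalizing f g with
  | zero => intro u hu; omega
  | succ B ih =>
    have hp : 0 < p := (Nat.zero_le _).trans_lt (hf 0)
    have hsplit (f : ℕ → ℕ) :
        ∑ u ∈ range (B + 1), f u * p ^ u = f 0 + p * ∑ u ∈ range B, f (u + 1) * p ^ u := by
      rw [sum_range_succ', mul_sum, add_comm]
      simp only [pow_succ, pow_zero, mul_one]
      congr 1
      exact sum_congr rfl fun u _ => by ring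
    rw [hsplit, hsplit] at h
    have h0 : f 0 = g 0 := by
      simpa [Nat.add_mul_mod_self_left, Nat.mod_eq_of_lt (hf 0), Nat.mod_eq_of_lt (hg 0)]
        using congrArg (· % p) h
    rw [h0, add_right_inj, Nat.mul_right_inj hp.ne'] at h
    rintro (_ | u) hu
    · exact h0
    · exact ih (fun u => hf (u + 1)) (fun u => hg (u + 1)) h u (by omega)

lemma sum_range_single_mul_pow {p B u : ℕ} (hu : u < B) (a : ℕ) :
    ∑ i ∈ range B, (Pi.single u a : ℕ → ℕ) i * p ^ i = a * p ^ u := by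
  simp [Pi.single_apply, ite_mul, hu]

/-- The Raney number `x / (x + k p) · C(x + k p, k)`, written without division. -/
def raney (p x : ℕ) : ℕ → ℤ
  | 0 => 1
  | k + 1 => ((x + (k + 1) * p).choose (k + 1) : ℤ) - p * ((x + (k + 1) * p - 1).choose k : ℤ)

noncomputable def raneySeries (p x : ℕ) : ℤ⟦X⟧ := mk (raney p x)

section Raney

variable {p : ℕ}

lemma raney_succ_of_eq {x k N : ℕ} (h : x + (k + 1) * p = N + 1) :
    raney p x (k + 1) = ((N + 1).choose (k + 1) : ℤ) - p * (N.choose k : ℤ) := by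
  simp only [raney, h, Nat.add_sub_cancel]

lemma raney_zero_left (hp : 0 < p) (k : ℕ) : raney p 0 (k + 1) = 0 := by
  obtain ⟨N, hN⟩ : ∃ N, (k + 1) * p = N + 1 := Nat.exists_eq_add_one.mpr (by positivity)
  have : (N + 1).choose (k + 1) = p * N.choose k := Nat.eq_of_mul_eq_mul_left k.succ_pos <| by
    rw [← mul_assoc, hN, Nat.add_one_mul_choose_eq, mul_comm]
  rw [raney_succ_of_eq (by rw [zero_add, hN]), this]
  push_cast
  ring

lemma raney_succ_succ (hp : 0 < p) (x k : ℕ) :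
    raney p (x + 1) (k + 1) = raney p x (k + 1) + raney p (x + p) k := by
  obtain ⟨N, hN⟩ : ∃ N, x + (k + 1) * p = N + 1 := Nat.exists_eq_add_one.mpr (by positivity)
  rw [raney_succ_of_eq (N := N + 1) (by linarith), raney_succ_of_eq hN]
  rcases k with _ | k
  · simp only [zero_add, Nat.choose_one_right, Nat.choose_zero_right, raney]
    push_cast
    ring
  · rw [raney_succ_of_eq (N := N) (by linarith), Nat.choose_succ_succ' (N + 1),
      Nat.choose_succ_succ' N k]
    push_cast
    ring

lemma raneySeries_zero (hp : 0 < p) : raneySeries p 0 = 1 := by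
  ext (_ | k)
  · simp [raneySeries, raney]
  · simp [raneySeries, raney_zero_left hp, coeff_one]

lemma raneySeries_succ (hp : 0 < p) (x : ℕ) :
    raneySeries p (x + 1) = raneySeries p x + X * raneySeries p (x + p) := by
  ext (_ | k)
  · simp [raneySeries, raney]
  · simp [raneySeries, raney_succ_succ hp, coeff_succ_X_mul]

lemma raneySeries_add (hp : 0 < p) (x y : ℕ) :
    raneySeries p (x + y) = raneySeries p x * raneySeries p y := by
  ext n
  induction n using Nat.strong_induction_on generalizing x with | _ n ih =>
  induction x with
  | zero => rw [raneySeries_zero hp, one_mul, zero_add]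
  | succ x ihx =>
    rw [raneySeries_succ hp, add_mul, map_add, ← ihx, add_right_comm, raneySeries_succ hp,
      map_add, mul_assoc, add_right_comm x y p]
    congr 1
    rcases n with _ | n
    · simp
    · rw [coeff_succ_X_mul, coeff_succ_X_mul, ih n n.lt_succ_self]

lemma raneySeries_eq_pow (hp : 0 < p) (x : ℕ) : raneySeries p x = raneySeries p 1 ^ x := by
  induction x with
  | zero => rw [raneySeries_zero hp, pow_zero]
  | succ x ih => rw [pow_succ, ← ih, raneySeries_add hp]

lemma raneySeries_one_eq (hp : 0 < p) : raneySeries p 1 = 1 + X * raneySeries p 1 ^ p :=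
  (raneySeries_succ hp 0).trans (by rw [raneySeries_zero hp, zero_add, raneySeries_eq_pow hp p])

lemma raney_succ_eq_coeff_pow (hp : 0 < p) (m : ℕ) :
    raney p 1 (m + 1) = coeff m (raneySeries p 1 ^ p) :=
  calc raney p 1 (m + 1) = coeff (m + 1) (1 + X * raneySeries p 1 ^ p) := by
        rw [← raneySeries_one_eq hp, raneySeries, coeff_mk]
    _ = coeff m (raneySeries p 1 ^ p) := by
        rw [map_add, coeff_succ_X_mul, coeff_one, if_neg m.succ_ne_zero, zero_add]

end Raney

lemma fussCatalan_eq_raney {p n : ℕ} (hn : 1 ≤ n) : (FussCatalan n p : ℤ) = raney p 1 n := by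
  obtain ⟨m, rfl⟩ := Nat.exists_eq_add_of_le' hn
  have hm : (m + 1) * raney p 1 (m + 1) = ((p * (m + 1)).choose m : ℤ) := by
    rw [raney_succ_of_eq (N := p * (m + 1)) (by ring)]
    have h : ((p * (m + 1) + 1 : ℕ) * (p * (m + 1)).choose m : ℤ) =
        ((p * (m + 1) + 1).choose (m + 1) * (m + 1) : ℕ) := by
      exact_mod_cast Nat.add_one_mul_choose_eq _ m
    push_cast at h ⊢
    linear_combination -h
  rw [FussCatalan, Nat.add_sub_cancel, Int.natCast_div, ← hm]
  push_cast
  rw [Int.mul_ediv_cancel_left _ (by positivity)]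

/-- `repunit p i = 1 + p + ⋯ + p ^ (i - 1) = (p ^ i - 1) / (p - 1)`. -/
def repunit (p : ℕ) : ℕ → ℕ
  | 0 => 0
  | i + 1 => p * repunit p i + 1

noncomputable def repunitSeries (R : Type*) [Semiring R] (p : ℕ) : R⟦X⟧ :=
  mk ((Set.range (repunit p)).indicator 1)

section Repunit

variable {p : ℕ}

lemma sub_one_mul_repunit_add_one (hp : 0 < p) (i : ℕ) : (p - 1) * repunit p i + 1 = p ^ i := by
  induction i with
  | zero => rfl
  | succ i ih =>
    obtain ⟨q, rfl⟩ := Nat.exists_eq_add_of_le' hp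
    rw [repunit, pow_succ, ← ih]
    simp only [Nat.add_sub_cancel]
    ring

lemma repunit_strictMono (hp : 0 < p) : StrictMono (repunit p) :=
  strictMono_nat_of_lt_succ fun i => by
    simp only [repunit]
    nlinarith

lemma le_repunit (hp : 0 < p) (i : ℕ) : i ≤ repunit p i := (repunit_strictMono hp).le_apply

lemma succ_mem_range_repunit_iff (hp : 0 < p) (m : ℕ) :
    m + 1 ∈ Set.range (repunit p) ↔ p ∣ m ∧ m / p ∈ Set.range (repunit p) := by
  constructor
  · rintro ⟨_ | i, hi⟩
    · simp [repunit] at hi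
    · obtain rfl : p * repunit p i = m := by simpa [repunit] using hi
      exact ⟨dvd_mul_right _ _, i, by rw [Nat.mul_div_cancel_left _ hp]⟩
  · rintro ⟨⟨q, rfl⟩, i, hi⟩
    refine ⟨i + 1, ?_⟩
    rw [Nat.mul_div_cancel_left _ hp] at hi
    rw [repunit, hi]

lemma le_of_pow_le_mul_sub_one_add_one {i n : ℕ} (hp : 2 ≤ p) (h : p ^ i ≤ n * (p - 1) + 1) :
    i ≤ n := by
  rw [← sub_one_mul_repunit_add_one (by omega) i] at h
  have hi := le_repunit (p := p) (by omega) i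
  exact Nat.le_of_mul_le_mul_left (by nlinarith) (by omega : 0 < p - 1)

lemma map_repunitSeries {R S : Type*} [Semiring R] [Semiring S] (φ : R →+* S) :
    map φ (repunitSeries R p) = repunitSeries S p := by
  classical
  ext m
  simp [repunitSeries, Set.indicator_apply, apply_ite φ]

lemma coeff_sum_X_pow_repunit {R : Type*} [Semiring R] {B m : ℕ} (hp : 0 < p) (hm : m < B) :
    coeff m (∑ i ∈ range B, (X : R⟦X⟧) ^ repunit p i) = coeff m (repunitSeries R p) := by
  classical
  simp only [map_sum, coeff_X_pow, repunitSeries, coeff_mk, Set.indicator_apply]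
  by_cases h : m ∈ Set.range (repunit p)
  · obtain ⟨j, rfl⟩ := h
    have hj : j ∈ range B := mem_range.mpr ((le_repunit hp j).trans_lt hm)
    simp [(repunit_strictMono hp).injective.eq_iff, hj]
  · rw [if_neg h]
    exact sum_eq_zero fun i _ => if_neg fun hi => h ⟨i, hi.symm⟩

lemma map_raneySeries_one_eq_repunitSeries [hp : Fact p.Prime] :
    map (Int.castRingHom (ZMod p)) (raneySeries p 1) = repunitSeries (ZMod p) p := by
  classical
  have hp0 : 0 < p := hp.out.pos
  ext m
  induction m using Nat.strong_induction_on with | _ m ih =>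
  rcases m with _ | m
  · rw [repunitSeries, coeff_mk,
      Set.indicator_of_mem (show 0 ∈ Set.range (repunit p) from ⟨0, rfl⟩)]
    simp [raneySeries, raney]
  · rw [raneySeries_one_eq hp0, map_add, map_mul, map_pow, map_X, map_one, map_add,
      coeff_succ_X_mul, coeff_one, if_neg m.succ_ne_zero, zero_add, coeff_pow_expChar,
      ih (m / p) (Nat.lt_succ_of_le (Nat.div_le_self m p)), repunitSeries, coeff_mk, coeff_mk]
    simp only [Set.indicator_apply, succ_mem_range_repunit_iff hp0]
    by_cases hm : p ∣ m
    · simp [hm, apply_ite (· ^ p), hp.out.ne_zero]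
    · simp [hm]

end Repunit

/-- The ways to write `M` as a sum of exactly `p` powers `p ^ i` with `i < B`: `k i` counts the
copies of `p ^ i`. -/
def sumPowReprs (p B M : ℕ) : Finset (ℕ → ℕ) :=
  {k ∈ (range B).piAntidiag p | ∑ i ∈ range B, k i * p ^ i = M}

lemma filter_piAntidiag_repunit_eq_sumPowReprs {p B n : ℕ} (hp : 2 ≤ p) (hn : 1 ≤ n) :
    {k ∈ (range B).piAntidiag p | ∑ i ∈ range B, k i * repunit p i = n - 1} =
      sumPowReprs p B (n * (p - 1) + 1) := by
  refine filter_congr fun k hk => ?_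
  have hsum : ∑ i ∈ range B, k i * p ^ i =
      (p - 1) * ∑ i ∈ range B, k i * repunit p i + ∑ i ∈ range B, k i := by
    rw [mul_sum, ← sum_add_distrib]
    refine sum_congr rfl fun i _ => ?_
    rw [← sub_one_mul_repunit_add_one (by omega) i]
    ring
  have hM : n * (p - 1) + 1 = (p - 1) * (n - 1) + p := by
    obtain ⟨m, rfl⟩ := Nat.exists_eq_add_of_le' hn
    obtain ⟨q, rfl⟩ : ∃ q, p = q + 1 := ⟨p - 1, by omega⟩
    simp only [Nat.add_sub_cancel]
    ring
  rw [hsum, (mem_piAntidiag.mp hk).1, hM, add_left_inj, Nat.mul_right_inj (by omega)]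

theorem raney_modEq_sum_multinomial {p n : ℕ} (hp : p.Prime) (hn : 1 ≤ n) :
    raney p 1 n ≡ ∑ k ∈ sumPowReprs p (n + 1) (n * (p - 1) + 1),
      (Nat.multinomial (range (n + 1)) k : ℤ) [ZMOD p ^ 2] := by
  have := Fact.mk hp
  obtain ⟨m, rfl⟩ := Nat.exists_eq_add_of_le' hn
  obtain ⟨E, hE⟩ : (p ^ 2 : ℤ⟦X⟧) ∣ raneySeries p 1 ^ p - repunitSeries ℤ p ^ p := by
    simpa using dvd_sub_pow_of_dvd_sub (natCast_dvd_sub_of_map_eq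
      (map_raneySeries_one_eq_repunitSeries.trans (map_repunitSeries _).symm)) 1
  have hmod : coeff m (repunitSeries ℤ p ^ p) ≡ coeff m (raneySeries p 1 ^ p) [ZMOD p ^ 2] := by
    refine Int.modEq_iff_dvd.mpr ⟨coeff m E, ?_⟩
    rw [← map_sub, hE, ← map_natCast (C (R := ℤ)), ← map_pow, coeff_C_mul]
  rw [raney_succ_eq_coeff_pow hp.pos, ← filter_piAntidiag_repunit_eq_sumPowReprs hp.two_le hn,
    Nat.add_sub_cancel, ← coeff_sum_X_pow_pow, ← coeff_pow_eq_of_coeff_eq fun i hi =>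
      (coeff_sum_X_pow_repunit hp.pos (by omega)).symm]
  exact hmod.symm

namespace sumPowReprs

variable {p B M : ℕ} {k : ℕ → ℕ}

lemma mem_iff : k ∈ sumPowReprs p B M ↔
    (∑ i ∈ range B, k i = p ∧ ∀ i, k i ≠ 0 → i < B) ∧ ∑ i ∈ range B, k i * p ^ i = M := by
  simp [sumPowReprs]

lemma eq_single_or_lt (hp : 0 < p) (hk : k ∈ sumPowReprs p B M) :
    (∃ u < B, k = Pi.single u p ∧ M = p ^ (u + 1)) ∨ ∀ u, k u < p := by
  obtain ⟨⟨hsum, hsupp⟩, hM⟩ := mem_iff.mp hk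
  by_cases hlt : ∀ u, k u < p
  · exact .inr hlt
  obtain ⟨u, hpu⟩ := not_forall.mp hlt
  rw [not_lt] at hpu
  have hu : u ∈ range B := mem_range.mpr (hsupp u (by omega))
  have hku : k u = p := le_antisymm (hsum ▸ single_le_sum (fun _ _ => Nat.zero_le _) hu) hpu
  have hk : k = Pi.single u p := by
    funext i
    rcases eq_or_ne i u with rfl | hi
    · rw [Pi.single_eq_same, hku]
    rw [Pi.single_eq_of_ne hi]
    by_contra hki
    have := add_le_sum (f := k) (fun _ _ => Nat.zero_le _) hu (mem_range.mpr (hsupp i hki)) hi.symm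
    omega
  refine .inl ⟨u, mem_range.mp hu, hk, ?_⟩
  rw [← hM, hk, sum_range_single_mul_pow (mem_range.mp hu), pow_succ, mul_comm]

/-- The base-`p` digits of a power of `p` add up to `1`, not to `p`. -/
lemma ne_pow (hp : 2 ≤ p) (hk : k ∈ sumPowReprs p B M) (hlt : ∀ u, k u < p) (i : ℕ) :
    M ≠ p ^ i := by
  intro hi
  obtain ⟨⟨hsum, hsupp⟩, hM⟩ := mem_iff.mp hk
  have hsub : range B ⊆ range (B + i + 1) := range_subset_range.mpr (by omega)
  have hext (F : ℕ → ℕ) : ∑ u ∈ range (B + i + 1), k u * F u = ∑ u ∈ range B, k u * F u :=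
    (sum_subset hsub fun u _ hu => by
      rw [of_not_not fun h => hu (mem_range.mpr (hsupp u h)), zero_mul]).symm
  have hdigits := Nat.eqOn_of_sum_range_mul_pow_eq hlt (g := Pi.single i 1)
    (fun u => by rw [Pi.single_apply]; split_ifs <;> omega)
    (by rw [hext, hM, hi, sum_range_single_mul_pow (by omega), one_mul])
  have : ∑ u ∈ range (B + i + 1), k u = 1 := by
    rw [sum_congr rfl fun u hu => hdigits u (mem_range.mp hu), sum_pi_single',
      if_pos (mem_range.mpr (by omega))]
  have h1 := hext fun _ => 1
  simp only [mul_one, this, hsum] at h1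
  omega

lemma eq_pow (hp : 2 ≤ p) {i : ℕ} (hi : 1 ≤ i) (hiB : i ≤ B) :
    sumPowReprs p B (p ^ i) = {Pi.single (i - 1) p} := by
  ext k
  rw [mem_singleton]
  constructor
  · intro hk
    rcases eq_single_or_lt (by omega) hk with ⟨u, -, rfl, hpow⟩ | hlt
    · rw [Nat.pow_right_injective hp hpow, Nat.add_sub_cancel]
    · exact absurd rfl (ne_pow hp hk hlt i)
  · rintro rfl
    refine mem_iff.mpr ⟨⟨?_, fun j hj => ?_⟩, ?_⟩
    · rw [sum_pi_single', if_pos (mem_range.mpr (by omega))]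
    · rw [Pi.single_apply] at hj
      split_ifs at hj with h
      · omega
      · exact absurd rfl hj
    · rw [sum_range_single_mul_pow (by omega), ← pow_succ', Nat.sub_add_cancel hi]

lemma eq_extend (hp : 2 ≤ p) {r : ℕ} {a e : Fin r → ℕ} (ha : ∀ j, a j < p) (hsa : ∑ j, a j = p)
    (he : Injective e) (heB : ∀ j, e j < B) :
    sumPowReprs p B (∑ j, a j * p ^ e j) = {extend e a 0} := by
  have hK_lt (u : ℕ) : extend e a 0 u < p := by
    by_cases hu : ∃ j, e j = u
    · obtain ⟨j, rfl⟩ := hu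
      rw [he.extend_apply]
      exact ha j
    · rw [extend_apply' _ _ _ hu]
      exact Nat.zero_lt_of_lt hp
  have hK_zero {u : ℕ} (hu : B ≤ u) : extend e a 0 u = 0 :=
    extend_apply' _ _ _ fun ⟨j, hj⟩ => by have := heB j; omega
  have hsum (F : ℕ → ℕ) : ∑ i ∈ range B, extend e a 0 i * F i = ∑ j, a j * F (e j) :=
    sum_apply_extend he (fun j => mem_range.mpr (heB j)) a (fun i x => x * F i)
      fun _ => zero_mul _
  have hK : extend e a 0 ∈ sumPowReprs p B (∑ j, a j * p ^ e j) := by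
    refine mem_iff.mpr ⟨⟨?_, fun u hu => ?_⟩, hsum _⟩
    · simpa [hsa] using hsum fun _ => 1
    · by_contra h
      exact hu (hK_zero (not_lt.mp h))
  ext k
  rw [mem_singleton]
  refine ⟨fun hk => ?_, fun hk => hk ▸ hK⟩
  rcases eq_single_or_lt (by omega) hk with ⟨u, -, -, hpow⟩ | hlt
  · exact absurd hpow (ne_pow hp hK hK_lt (u + 1))
  · obtain ⟨⟨-, hsupp⟩, hM⟩ := mem_iff.mp hk
    have hdigits := Nat.eqOn_of_sum_range_mul_pow_eq hlt hK_lt (hM.trans (hsum _).symm)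
    funext u
    by_cases hu : u < B
    · exact hdigits u hu
    · rw [hK_zero (not_lt.mp hu)]
      by_contra h
      exact hu (hsupp u h)

lemma exists_strictAnti_repr (hp : p.Prime) (hk : k ∈ sumPowReprs p B M) (hlt : ∀ u, k u < p) :
    ∃ (r : ℕ) (a e : Fin r → ℕ), 2 ≤ r ∧ (∀ j, 0 < a j) ∧ (∀ j, Nat.Coprime (a j) p) ∧
      (∑ j, a j) = p ∧ StrictAnti e ∧ M = ∑ j, a j * p ^ e j := by
  obtain ⟨⟨hsum, -⟩, hM⟩ := mem_iff.mp hk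
  set t := {i ∈ range B | k i ≠ 0} with ht
  set e : Fin #t → ℕ := fun j => t.orderEmbOfFin rfl j.rev
  have he_mem (j : Fin #t) : e j ∈ t := t.orderEmbOfFin_mem rfl _
  have hsum_t (F : ℕ → ℕ) : ∑ j, k (e j) * F (e j) = ∑ i ∈ range B, k i * F i := by
    refine (Equiv.sum_comp Fin.revPerm fun j => k (t.orderEmbOfFin rfl j) *
      F (t.orderEmbOfFin rfl j)).trans ?_
    rw [← sum_image (f := fun i => k i * F i) (fun _ _ _ _ h => (t.orderEmbOfFin rfl).injective h),
      image_orderEmbOfFin_univ, ht, sum_filter_of_ne fun i _ h => left_ne_zero_of_mul h]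
  have hsum_e : ∑ j, k (e j) = p := by simpa [hsum] using hsum_t fun _ => 1
  have hk_pos (j : Fin #t) : 0 < k (e j) := Nat.pos_of_ne_zero (mem_filter.mp (he_mem j)).2
  refine ⟨#t, fun j => k (e j), e, ?_, hk_pos, fun j => ?_, hsum_e, ?_, ?_⟩
  · by_contra! h
    have hle := sum_le_card_nsmul univ (fun j => k (e j)) (p - 1) fun j _ =>
      Nat.le_sub_one_of_lt (hlt _)
    rw [card_univ, Fintype.card_fin, smul_eq_mul, hsum_e] at hle
    have := Nat.mul_le_mul_right (p - 1) (show #t ≤ 1 by omega)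
    have := hp.two_le
    omega
  · exact Nat.coprime_comm.mp ((Nat.Prime.coprime_iff_not_dvd hp).mpr
      (Nat.not_dvd_of_pos_of_lt (hk_pos j) (hlt _)))
  · exact (t.orderEmbOfFin rfl).strictMono.comp_strictAnti Fin.rev_strictAnti
  · rw [← hM, hsum_t]

end sumPowReprs

lemma lt_of_coprime_of_sum_eq {p r : ℕ} {a : Fin r → ℕ} (hp : p ≠ 1)
    (hcop : ∀ j, Nat.Coprime (a j) p) (hsa : ∑ j, a j = p) (j : Fin r) : a j < p := by
  refine (hsa ▸ single_le_sum (fun _ _ => Nat.zero_le _) (mem_univ j)).lt_of_ne fun h => hp ?_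
  simpa [h] using hcop j

lemma lt_succ_of_sum_mul_pow_eq {p n r : ℕ} {a e : Fin r → ℕ} (hp : 2 ≤ p) (ha : ∀ j, 0 < a j)
    (hM : n * (p - 1) + 1 = ∑ j, a j * p ^ e j) (j : Fin r) : e j < n + 1 :=
  Nat.lt_succ_of_le <| le_of_pow_le_mul_sub_one_add_one hp <| hM ▸
    (Nat.le_mul_of_pos_left _ (ha j)).trans
      (single_le_sum (f := fun j => a j * p ^ e j) (fun _ _ => Nat.zero_le _) (mem_univ j))

/-- The congruences modulo `p²` for the Fuß–Catalan numbers `F(n;p)`: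
(i) if `n = (p^i − 1)/(p−1)` with `i ≥ 1` (i.e. `n(p−1) + 1 = p^i`), then
`F(n;p) ≡ 1 (mod p²)`;
(ii) if `n(p−1) + 1 = a_1 p^{i_1} + … + a_r p^{i_r}` with `r ≥ 2`, all `a_j` positive
and relatively prime to `p`, `a_1 + … + a_r = p`, and `i_1 > … > i_r ≥ 0`, then
`F(n;p) ≡ p!/(a_1!⋯a_r!) (mod p²)`;
(iii) in all other cases `p² ∣ F(n;p)`. -/
theorem stmt_17 (p : ℕ) (hp : p.Prime) (n : ℕ) (hn : 1 ≤ n) :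
    ((∃ i : ℕ, 1 ≤ i ∧ n * (p - 1) + 1 = p ^ i) →
      FussCatalan n p ≡ 1 [MOD p ^ 2]) ∧
    (∀ r : ℕ, 2 ≤ r → ∀ a e : Fin r → ℕ,
      (∀ j, 0 < a j) → (∀ j, Nat.Coprime (a j) p) → (∑ j, a j) = p → StrictAnti e →
      n * (p - 1) + 1 = ∑ j, a j * p ^ e j →
      FussCatalan n p ≡ Nat.multinomial Finset.univ a [MOD p ^ 2]) ∧
    ((¬ ∃ i : ℕ, 1 ≤ i ∧ n * (p - 1) + 1 = p ^ i) →
      (¬ ∃ (r : ℕ) (a e : Fin r → ℕ), 2 ≤ r ∧ (∀ j, 0 < a j) ∧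
        (∀ j, Nat.Coprime (a j) p) ∧ (∑ j, a j) = p ∧ StrictAnti e ∧
        n * (p - 1) + 1 = ∑ j, a j * p ^ e j) →
      p ^ 2 ∣ FussCatalan n p) := by
  have hp2 := hp.two_le
  have key := fussCatalan_eq_raney (p := p) hn ▸ raney_modEq_sum_multinomial hp hn
  refine ⟨fun ⟨i, hi, hM⟩ => ?_, fun r _ a e ha hcop hsa he hM => ?_, fun hni hnii => ?_⟩
  · rw [hM, sumPowReprs.eq_pow hp2 hi
      ((le_of_pow_le_mul_sub_one_add_one hp2 hM.ge).trans n.le_succ),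
      sum_singleton, Nat.multinomial_single] at key
    exact Int.natCast_modEq_iff.mp (by exact_mod_cast key)
  · have he_lt := lt_succ_of_sum_mul_pow_eq hp2 ha hM
    rw [hM, sumPowReprs.eq_extend hp2 (lt_of_coprime_of_sum_eq hp.ne_one hcop hsa) hsa
      he.injective he_lt, sum_singleton,
      Nat.multinomial_extend he.injective fun j => mem_range.mpr (he_lt j)] at key
    exact Int.natCast_modEq_iff.mp key
  · have hempty : sumPowReprs p (n + 1) (n * (p - 1) + 1) = ∅ := by
      refine eq_empty_iff_forall_notMem.mpr fun k hk => ?_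
      rcases sumPowReprs.eq_single_or_lt hp.pos hk with ⟨u, -, -, hpow⟩ | hlt
      · exact hni ⟨u + 1, by omega, hpow⟩
      · exact hnii (sumPowReprs.exists_strictAnti_repr hp hk hlt)
    rw [hempty, sum_empty] at key
    exact_mod_cast Int.modEq_zero_iff_dvd.mp key
end
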